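/- arXiv:1601.05003 — 6 statements merged into one kernel-verified Lean document; each statement's English description precedes it below -/
import Mathlib

section
/- Let G be a graph and let B be the set of special branching points of G that have at least two legs attached. Then DP(G) ≥ |B|. More precisely, for every detection pair (W,L) of G and every x ∈ B, the set consisting of x together with all vertices on legs attached to x contains at least one detector (element of W ∪ L), and these sets are pairwise disjoint for distinct elements of B. -/
open SimpleGraph

namespace DetPair

variable {V : Type*}

/-- `u` is dominated by some watcher in `W` (closed neighbourhood). -/
def Dominated (G : SimpleGraph V) (W : Set V) (u : V) : Prop :=
  ∃ w ∈ W, w = u ∨ G.Adj w u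

/-- `(W, L)` is a detection pair of `G` (pairwise formulation). -/
def IsDetectionPair (G : SimpleGraph V) (W L : Set V) : Prop :=
  ∀ u v : V, u ≠ v →
    Dominated G W u ∨ Dominated G W v ∨ ∃ l ∈ L, G.dist u l ≠ G.dist v l

/-- A vertex `u` is distinguished by the pair `(W, L)`. -/
def Distinguished (G : SimpleGraph V) (W L : Set V) (u : V) : Prop :=
  Dominated G W u ∨ ∀ v, v ≠ u → Dominated G W v ∨ ∃ l ∈ L, G.dist u l ≠ G.dist v l

def IsResolving (G : SimpleGraph V) (L : Set V) : Prop :=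
  ∀ u v : V, u ≠ v → ∃ l ∈ L, G.dist u l ≠ G.dist v l

def IsDominating (G : SimpleGraph V) (W : Set V) : Prop :=
  ∀ u, Dominated G W u

/-- `DP G`: minimum size of a detection pair. -/
noncomputable def DP (G : SimpleGraph V) : ℕ :=
  sInf {n | ∃ W L : Set V, IsDetectionPair G W L ∧ W.ncard + L.ncard = n}

/-- `MD G`: metric dimension. -/
noncomputable def MD (G : SimpleGraph V) : ℕ :=
  sInf {n | ∃ L : Set V, IsResolving G L ∧ L.ncard = n}

/-- `gamma G`: domination number. -/
noncomputable def gamma (G : SimpleGraph V) : ℕ :=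
  sInf {n | ∃ W : Set V, IsDominating G W ∧ W.ncard = n}

/-- `p` is a leg attached to `x`: a path starting at a neighbour of `x` and ending at a
leaf, all of whose vertices except the last have degree 2. -/
def IsLeg [Fintype V] (G : SimpleGraph V) [DecidableRel G.Adj] (x : V) (p : List V) : Prop :=
  p ≠ [] ∧ p.Nodup ∧ x ∉ p ∧ List.Chain G.Adj x p ∧
  (∃ y, p.getLast? = some y ∧ G.degree y = 1) ∧
  ∀ v ∈ p.dropLast, G.degree v = 2

/-- A special branching point: a vertex of degree at least 3 with a leg attached. -/
def IsSpecialBranchingPoint [Fintype V] (G : SimpleGraph V) [DecidableRel G.Adj]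
    (x : V) : Prop :=
  3 ≤ G.degree x ∧ ∃ p, IsLeg G x p

/-- `x` together with all vertices of legs attached to `x`. -/
def LegSet [Fintype V] (G : SimpleGraph V) [DecidableRel G.Adj] (x : V) : Set V :=
  insert x {v | ∃ p, IsLeg G x p ∧ v ∈ p}


/-! Let `a`, `b` be the first vertices of two disjoint legs at `x`. A leg hangs from `x`: its
vertices have no neighbours besides `x` and each other. Hence the closed neighbourhoods of `a`
and `b` lie in `LegSet G x`, and every vertex `l` outside it satisfies
`d(a, l) = d(x, l) + 1 = d(b, l)`, so a detection pair separating `a` from `b` needs a detector in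
`LegSet G x`. Leg vertices have degree at most `2`, so the leg sets of distinct branching points
are disjoint, and picking one detector in each gives an injection `B → W ∪ L`. -/

section Degree

variable {G : SimpleGraph V} [Fintype V] [DecidableRel G.Adj] {u w z b : V}

theorem _root_.SimpleGraph.eq_of_adj_of_degree_eq_one (h : G.degree u = 1) (hz : G.Adj u z)
    (hw : G.Adj u w) : w = z :=
  Finset.card_le_one.mp h.le w (by simpa using hw) z (by simpa using hz)

theorem _root_.SimpleGraph.eq_or_eq_of_adj_of_degree_eq_two (h : G.degree u = 2)
    (hz : G.Adj u z) (hb : G.Adj u b) (hzb : z ≠ b) (hw : G.Adj u w) : w = z ∨ w = b := by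
  classical
  have hsub : ({z, b} : Finset V) ⊆ G.neighborFinset u := by
    intro t ht
    rcases Finset.mem_insert.mp ht with rfl | ht
    · simpa using hz
    · rw [Finset.mem_singleton.mp ht]; simpa using hb
  have hcard : (G.neighborFinset u).card ≤ ({z, b} : Finset V).card := by
    rw [Finset.card_pair hzb, card_neighborFinset_eq_degree, h]
  have hw' : w ∈ ({z, b} : Finset V) := by
    rw [Finset.eq_of_subset_of_card_le hsub hcard]; simpa using hw
  simpa using hw'

end Degree

def HangsFrom (G : SimpleGraph V) (x : V) (S : Set V) : Prop :=
  ∀ u ∈ S, ∀ w, G.Adj u w → w = x ∨ w ∈ S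

namespace HangsFrom

variable {G : SimpleGraph V} {x : V} {S : Set V}

theorem notMem_of_isChain (h : HangsFrom G x S) {z : V} {p : List V} (hzp : (z :: p).IsChain G.Adj)
    (hzS : z ∉ S) (hzx : z ≠ x) (hxp : x ∉ p) : ∀ v ∈ p, v ∉ S := by
  induction p generalizing z with
  | nil => simp
  | cons a rest ih =>
    obtain ⟨hza, hrest⟩ := List.isChain_cons_cons.mp hzp
    have haS : a ∉ S := fun haS => (h a haS z hza.symm).elim hzx hzS
    have hax : a ≠ x := fun hax => hxp (hax ▸ List.mem_cons_self)
    intro v hv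
    rcases List.mem_cons.mp hv with rfl | hv
    · exact haS
    · exact ih hrest haS hax (fun hx => hxp (List.mem_cons_of_mem a hx)) v hv

theorem dist_add_one_le_length (h : HangsFrom G x S) {l : V} (hl : l ∉ S) {u : V}
    (w : G.Walk u l) (hu : u ∈ S) : G.dist x l + 1 ≤ w.length := by
  induction w with
  | nil => exact absurd hu hl
  | @cons u b _ hub w ih =>
    rw [Walk.length_cons]
    rcases h u hu b hub with rfl | hb
    · exact Nat.add_le_add_right (dist_le w) 1
    · exact (ih hl hb).trans (Nat.le_succ _)

theorem dist_eq (h : HangsFrom G x S) {l u : V} (hr : G.Reachable x l) (hxu : G.Adj x u)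
    (hu : u ∈ S) (hl : l ∉ S) : G.dist u l = G.dist x l + 1 := by
  apply le_antisymm
  · obtain ⟨w, hw⟩ := hr.exists_walk_length_eq_dist
    simpa [hw, add_comm] using dist_le (Walk.cons hxu.symm w)
  · obtain ⟨w, hw⟩ := (hxu.symm.reachable.trans hr).exists_walk_length_eq_dist
    exact hw ▸ h.dist_add_one_le_length hl w hu

end HangsFrom

section Legs

variable [Fintype V] {G : SimpleGraph V} [DecidableRel G.Adj]

theorem adj_eq_or_mem_of_isChain {q : List V} {z : V} (hchain : (z :: q).IsChain G.Adj)
    (hnodup : (z :: q).Nodup) (hlast : ∃ y, q.getLast? = some y ∧ G.degree y = 1)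
    (hdrop : ∀ v ∈ q.dropLast, G.degree v = 2) :
    ∀ u ∈ q, ∀ w, G.Adj u w → w = z ∨ w ∈ q := by
  induction q generalizing z with
  | nil => simp
  | cons a rest ih =>
    intro u hu w hw
    rcases List.mem_cons.mp hu with rfl | hu
    · obtain ⟨hza, hrest⟩ := List.isChain_cons_cons.mp hchain
      cases rest with
      | nil =>
        obtain ⟨y, hy, hdy⟩ := hlast
        obtain rfl : u = y := by simpa using hy
        exact .inl (eq_of_adj_of_degree_eq_one hdy hza.symm hw)
      | cons b rest' =>
        have hzb : z ≠ b := by rintro rfl; simp at hnodup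
        rcases eq_or_eq_of_adj_of_degree_eq_two (hdrop u (by simp)) hza.symm
          (List.isChain_cons_cons.mp hrest).1 hzb hw with rfl | rfl
        · exact .inl rfl
        · simp
    · have hrne : rest ≠ [] := List.ne_nil_of_mem hu
      have hlast' : ∃ y, rest.getLast? = some y ∧ G.degree y = 1 := by
        obtain ⟨b, rest', rfl⟩ := List.exists_cons_of_ne_nil hrne
        simpa only [List.getLast?_cons_cons] using hlast
      have hdrop' : ∀ v ∈ rest.dropLast, G.degree v = 2 := by
        obtain ⟨b, rest', rfl⟩ := List.exists_cons_of_ne_nil hrne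
        intro v hv
        exact hdrop v (by rw [List.dropLast_cons_cons]; exact List.mem_cons_of_mem a hv)
      rcases ih hchain.tail (List.nodup_cons.mp hnodup).2 hlast' hdrop' u hu w hw with rfl | h
      · simp
      · exact .inr (List.mem_cons_of_mem a h)

namespace IsLeg

variable {x : V} {p : List V}

theorem degree_le_two (hp : IsLeg G x p) {v : V} (hv : v ∈ p) : G.degree v ≤ 2 := by
  obtain ⟨hne, -, -, -, ⟨y, hy, hdy⟩, hdrop⟩ := hp
  rw [← List.dropLast_append_getLast hne, List.mem_append, List.mem_singleton] at hv
  rcases hv with hv | rfl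
  · exact (hdrop v hv).le
  · rw [List.getLast?_eq_some_getLast hne, Option.some_inj] at hy
    rw [hy, hdy]
    omega

theorem hangsFrom (hp : IsLeg G x p) : HangsFrom G x {v | v ∈ p} := by
  obtain ⟨-, hnd, hxp, hch, hlast, hdrop⟩ := hp
  exact adj_eq_or_mem_of_isChain hch (List.nodup_cons.mpr ⟨hxp, hnd⟩) hlast hdrop

theorem mem_legSet (hp : IsLeg G x p) {v : V} (hv : v ∈ p) : v ∈ LegSet G x :=
  Set.mem_insert_of_mem x ⟨p, hp, hv⟩

end IsLeg

theorem disjoint_legSet {x y : V} (hx : 3 ≤ G.degree x) (hy : 3 ≤ G.degree y) (hxy : x ≠ y) :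
    Disjoint (LegSet G x) (LegSet G y) := by
  have notMem_leg : ∀ {z w : V} {p : List V}, 3 ≤ G.degree z → IsLeg G w p → z ∉ p :=
    fun hz hp hzp => by have := hp.degree_le_two hzp; omega
  rw [Set.disjoint_left]
  rintro v (rfl | ⟨p, hp, hvp⟩) (rfl | ⟨q, hq, hvq⟩)
  · exact hxy rfl
  · exact notMem_leg hx hq hvq
  · exact notMem_leg hy hp hvp
  · exact hq.hangsFrom.notMem_of_isChain hp.2.2.2.1 (notMem_leg hx hq) hxy (notMem_leg hy hp) v
      hvp hvq

theorem exists_detector_mem_legSet {W L : Set V} (hdp : IsDetectionPair G W L) {x : V}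
    {p q : List V} (hp : IsLeg G x p) (hq : IsLeg G x q) (hpq : p.Disjoint q) :
    ∃ d ∈ W ∪ L, d ∈ LegSet G x := by
  obtain ⟨a, p', rfl⟩ := List.exists_cons_of_ne_nil hp.1
  obtain ⟨b, q', rfl⟩ := List.exists_cons_of_ne_nil hq.1
  have hxa : G.Adj x a := (List.isChain_cons_cons.mp hp.2.2.2.1).1
  have hxb : G.Adj x b := (List.isChain_cons_cons.mp hq.2.2.2.1).1
  have hab : a ≠ b := fun h => hpq List.mem_cons_self (h ▸ List.mem_cons_self)
  have watcher_mem {r : List V} {c : V} (hr : IsLeg G x (c :: r)) {w : V}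
      (hw : w = c ∨ G.Adj w c) : w ∈ LegSet G x := by
    rcases hw with rfl | hwc
    · exact hr.mem_legSet List.mem_cons_self
    · rcases hr.hangsFrom c List.mem_cons_self w hwc.symm with rfl | hwr
      · exact Set.mem_insert _ _
      · exact hr.mem_legSet hwr
  rcases hdp a b hab with ⟨w, hwW, hw⟩ | ⟨w, hwW, hw⟩ | ⟨l, hlL, hld⟩
  · exact ⟨w, .inl hwW, watcher_mem hp hw⟩
  · exact ⟨w, .inl hwW, watcher_mem hq hw⟩
  · by_contra! hout
    have hl : l ∉ LegSet G x := hout l (.inr hlL)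
    apply hld
    by_cases hr : G.Reachable x l
    · rw [hp.hangsFrom.dist_eq hr hxa List.mem_cons_self fun h => hl (hp.mem_legSet h),
        hq.hangsFrom.dist_eq hr hxb List.mem_cons_self fun h => hl (hq.mem_legSet h)]
    · rw [dist_eq_zero_of_not_reachable fun h => hr (hxa.reachable.trans h),
        dist_eq_zero_of_not_reachable fun h => hr (hxb.reachable.trans h)]

end Legs

theorem _root_.Set.ncard_le_ncard_of_pairwiseDisjoint {α ι : Type*} {B : Set ι} {D : Set α}
    {S : ι → Set α} (hD : D.Finite) (hS : B.PairwiseDisjoint S)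
    (hmeet : ∀ i ∈ B, ∃ d ∈ D, d ∈ S i) : B.ncard ≤ D.ncard := by
  obtain rfl | ⟨i, hi⟩ := B.eq_empty_or_nonempty
  · simp
  have : Nonempty α := ⟨(hmeet i hi).choose⟩
  choose! f hfD hfS using hmeet
  refine Set.ncard_le_ncard_of_injOn f hfD (fun i hi j hj hij => ?_) hD
  by_contra hne
  exact Set.disjoint_left.mp (hS hi hj hne) (hfS i hi) (hij ▸ hfS j hj)

theorem isDetectionPair_univ_empty (G : SimpleGraph V) : IsDetectionPair G Set.univ ∅ :=
  fun u _ _ => .inl ⟨u, Set.mem_univ u, .inl rfl⟩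

theorem le_DP_of_forall_le_ncard_union {G : SimpleGraph V} {n : ℕ}
    (h : ∀ W L : Set V, IsDetectionPair G W L → n ≤ (W ∪ L).ncard) : n ≤ DP G := by
  refine le_csInf ⟨_, Set.univ, ∅, isDetectionPair_univ_empty G, rfl⟩ ?_
  rintro _ ⟨W, L, hdp, rfl⟩
  exact (h W L hdp).trans (Set.ncard_union_le W L)

theorem stmt2_general [Fintype V] (G : SimpleGraph V) [DecidableRel G.Adj]
    (B : Set V)
    (hB : B = {x | 3 ≤ G.degree x ∧
      ∃ p q : List V, IsLeg G x p ∧ IsLeg G x q ∧ p.Disjoint q}) :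
    B.ncard ≤ DP G ∧
    ∀ W L : Set V, IsDetectionPair G W L →
      (∀ x ∈ B, ∃ d ∈ W ∪ L, d ∈ LegSet G x) ∧
      (∀ x ∈ B, ∀ y ∈ B, x ≠ y → Disjoint (LegSet G x) (LegSet G y)) := by
  have hdisj : B.PairwiseDisjoint (LegSet G) := by
    intro x hx y hy hxy
    rw [hB] at hx hy
    exact disjoint_legSet hx.1 hy.1 hxy
  have hdet (W L : Set V) (hdp : IsDetectionPair G W L) :
      ∀ x ∈ B, ∃ d ∈ W ∪ L, d ∈ LegSet G x := by
    rw [hB]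
    rintro x ⟨-, p, q, hp, hq, hpq⟩
    exact exists_detector_mem_legSet hdp hp hq hpq
  exact ⟨le_DP_of_forall_le_ncard_union fun W L hdp =>
      Set.ncard_le_ncard_of_pairwiseDisjoint (Set.toFinite _) hdisj (hdet W L hdp),
    fun W L hdp => ⟨hdet W L hdp, hdisj⟩⟩

/-- DP(G) ≥ |B| where B is the set of special branching points with at least two
(disjoint) legs attached; more precisely each leg-region of a point of `B` contains a
detector and these regions are pairwise disjoint. -/
theorem stmt2 [Fintype V] (G : SimpleGraph V) [DecidableRel G.Adj] (hc : G.Connected)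
    (B : Set V)
    (hB : B = {x | 3 ≤ G.degree x ∧
      ∃ p q : List V, IsLeg G x p ∧ IsLeg G x q ∧ p.Disjoint q}) :
    B.ncard ≤ DP G ∧
    ∀ W L : Set V, IsDetectionPair G W L →
      (∀ x ∈ B, ∃ d ∈ W ∪ L, d ∈ LegSet G x) ∧
      (∀ x ∈ B, ∀ y ∈ B, x ≠ y → Disjoint (LegSet G x) (LegSet G y)) :=
  stmt2_general G B hB

end DetPair
end

section
/- Let x be a special branching point of a graph G with t ≥ 0 leaf neighbours and ℓ legs of length at least 2 attached to x, and let (W,L) be a detection pair of G. If x ∈ W, then at least ℓ−1 of the legs of length at least 2 attached to x contain a detector of W ∪ L. If x ∉ W, then at least t+ℓ−1 of the legs attached to x contain a detector of W ∪ L. -/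
open SimpleGraph

namespace DetPair

variable {V : Type*}

/-!
Along a leg `p` attached to `x` the vertex `p[i]` has only its two path neighbours, so every
vertex `l` off the leg lies at distance `d(x, l) + i + 1` from it. Hence if two disjoint legs
contain no detector, their vertices at the same depth `i` are not separated by any listener,
and they are undominated unless `i = 0` and `x ∈ W`. So among pairwise disjoint legs of length
`> i` at most one is free of detectors. Take `i = 1` when `x ∈ W`; when `x ∉ W` take `i = 0`,
counting each leaf neighbour `b` as the leg `[b]`.
-/

theorem _root_.SimpleGraph.mem_of_adj_of_degree_le_card [Fintype V] {G : SimpleGraph V}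
    [DecidableRel G.Adj] {v u : V} {s : Finset V} (hs : ∀ w ∈ s, G.Adj v w)
    (hdeg : G.degree v ≤ s.card) (hu : G.Adj v u) : u ∈ s := by
  have hsub : s ⊆ G.neighborFinset v := fun w hw => (G.mem_neighborFinset v w).2 (hs w hw)
  rw [Finset.eq_of_subset_of_card_le hsub (by rwa [G.card_neighborFinset_eq_degree])]
  exact (G.mem_neighborFinset v u).2 hu

theorem _root_.Set.ncard_sub_one_le_ncard_sep {α : Type*} {s : Set α} {P : α → Prop}
    (h : {a ∈ s | ¬ P a}.Subsingleton) : s.ncard - 1 ≤ {a ∈ s | P a}.ncard := by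
  have hs : s = {a ∈ s | P a} ∪ {a ∈ s | ¬ P a} := by
    rw [← Set.sep_or]; simp only [em, Set.sep_true]
  have h1 : {a ∈ s | ¬ P a}.ncard ≤ 1 := (Set.ncard_le_one h.finite).2 fun a ha b hb => h ha hb
  have h2 := Set.ncard_union_le {a ∈ s | P a} {a ∈ s | ¬ P a}
  rw [← hs] at h2
  omega

namespace IsLeg

variable [Fintype V] {G : SimpleGraph V} [DecidableRel G.Adj] {x : V} {p : List V}

theorem finite_setOf : {p | IsLeg G x p}.Finite :=
  (List.finite_length_le V (Fintype.card V)).subset fun _ hp => hp.2.1.length_le_card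

theorem singleton {b : V} (hadj : G.Adj x b) (hdeg : G.degree b = 1) : IsLeg G x [b] :=
  ⟨List.cons_ne_nil b [], List.nodup_singleton _, by simpa using hadj.ne,
    List.isChain_pair.mpr hadj, ⟨b, rfl, hdeg⟩, by simp⟩

-- `(x :: p)[i]` is the predecessor of `p[i]` on the path `x, p[0], p[1], …`.
theorem adj_pred (hp : IsLeg G x p) {i : ℕ} (hi : i < p.length) :
    G.Adj ((x :: p)[i]'(by simp; omega)) p[i] :=
  List.isChain_iff_getElem.mp hp.2.2.2.1 i (by simpa using hi)

theorem adj_succ (hp : IsLeg G x p) {i : ℕ} (hi : i + 1 < p.length) :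
    G.Adj p[i] p[i + 1] :=
  hp.adj_pred hi

theorem pred_ne_succ (hp : IsLeg G x p) {i : ℕ} (hi : i + 1 < p.length) :
    (x :: p)[i]'(by simp; omega) ≠ p[i + 1] := by
  have hnd : (x :: p).Nodup := List.nodup_cons.2 ⟨hp.2.2.1, hp.2.1⟩
  rw [← List.getElem_cons_succ x p (i + 1) (by simpa using hi), Ne, hnd.getElem_inj_iff]
  omega

theorem degree_getElem_of_succ_lt (hp : IsLeg G x p) {i : ℕ} (hi : i + 1 < p.length) :
    G.degree p[i] = 2 :=
  hp.2.2.2.2.2 _ (by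
    rw [← List.getElem_dropLast (by rw [List.length_dropLast]; omega)]
    exact List.getElem_mem _)

theorem degree_getElem_of_succ_eq (hp : IsLeg G x p) {i : ℕ} (hi : i + 1 = p.length) :
    G.degree p[i] = 1 := by
  obtain ⟨y, hy, hdeg⟩ := hp.2.2.2.2.1
  rw [List.getLast?_eq_some_getLast hp.1, Option.some_inj, List.getLast_eq_getElem] at hy
  simp only [← hi, Nat.add_sub_cancel] at hy
  rwa [hy]

theorem eq_pred_or_eq_succ_of_adj (hp : IsLeg G x p) {i : ℕ} (hi : i < p.length) {u : V}
    (hu : G.Adj p[i] u) :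
    u = (x :: p)[i]'(by simp; omega) ∨ ∃ h : i + 1 < p.length, u = p[i + 1] := by
  classical
  by_cases hlast : i + 1 < p.length
  · have hmem := SimpleGraph.mem_of_adj_of_degree_le_card
      (s := {(x :: p)[i]'(by simp; omega), p[i + 1]})
      (by simpa using ⟨(hp.adj_pred hi).symm, hp.adj_succ hlast⟩)
      (by rw [hp.degree_getElem_of_succ_lt hlast, Finset.card_pair (hp.pred_ne_succ hlast)]) hu
    simp only [Finset.mem_insert, Finset.mem_singleton] at hmem
    exact hmem.imp_right fun h => ⟨hlast, h⟩
  · left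
    have hmem := SimpleGraph.mem_of_adj_of_degree_le_card
      (s := {(x :: p)[i]'(by simp; omega)}) (by simpa using (hp.adj_pred hi).symm)
      (by rw [hp.degree_getElem_of_succ_eq (by omega)]; rfl) hu
    simpa using hmem

theorem mem_or_eq_of_adj (hp : IsLeg G x p) {i : ℕ} (hi : i < p.length) {u : V}
    (hu : G.Adj p[i] u) : u ∈ p ∨ (i = 0 ∧ u = x) := by
  rcases hp.eq_pred_or_eq_succ_of_adj hi hu with rfl | ⟨h, rfl⟩
  · cases i with
    | zero => exact Or.inr ⟨rfl, rfl⟩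
    | succ j => exact Or.inl (List.getElem_mem _)
  · exact Or.inl (List.getElem_mem h)

theorem not_mem_of_adj_of_degree_eq_one (hp : IsLeg G x p) (hlen : 2 ≤ p.length) {b : V}
    (hadj : G.Adj x b) (hdeg : G.degree b = 1) : b ∉ p := by
  intro hb
  obtain ⟨i, hi, rfl⟩ := List.getElem_of_mem hb
  obtain ⟨rfl, -⟩ := (hp.mem_or_eq_of_adj hi hadj.symm).resolve_left hp.2.2.1
  rw [hp.degree_getElem_of_succ_lt (by omega)] at hdeg
  omega

theorem dist_getElem_le (hc : G.Connected) (hp : IsLeg G x p) {i : ℕ} (hi : i < p.length) :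
    G.dist p[i] x ≤ i + 1 := by
  induction i with
  | zero => exact (SimpleGraph.dist_eq_one_iff_adj.mpr (hp.adj_pred hi).symm).le
  | succ j ih =>
    calc G.dist p[j + 1] x ≤ G.dist p[j + 1] p[j] + G.dist p[j] x := hc.dist_triangle
      _ ≤ 1 + (j + 1) := by
        gcongr
        · exact (SimpleGraph.dist_eq_one_iff_adj.mpr (hp.adj_succ hi).symm).le
        · exact ih (by omega)
      _ = j + 1 + 1 := by ring

-- Every walk from the leg to a vertex off it has to run back through `x`.
theorem dist_add_le_length (hp : IsLeg G x p) {l v : V} (hl : l ∉ p) (w : G.Walk v l) :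
    ∀ i (hi : i < p.length), p[i] = v → G.dist x l + (i + 1) ≤ w.length := by
  induction w with
  | nil => rintro i hi rfl; exact absurd (List.getElem_mem hi) hl
  | @cons v u l h w ih =>
    rintro i hi rfl
    rw [SimpleGraph.Walk.length_cons]
    rcases hp.eq_pred_or_eq_succ_of_adj hi h with rfl | ⟨hi', rfl⟩
    · cases i with
      | zero => have := SimpleGraph.dist_le w; simp only [List.getElem_cons_zero] at this; omega
      | succ j => have := ih hl j (by omega) rfl; omega
    · have := ih hl (i + 1) hi' rfl; omega

theorem dist_getElem (hc : G.Connected) (hp : IsLeg G x p) {l : V} (hl : l ∉ p) {i : ℕ}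
    (hi : i < p.length) : G.dist p[i] l = G.dist x l + (i + 1) := by
  refine le_antisymm ?_ ?_
  · calc G.dist p[i] l ≤ G.dist p[i] x + G.dist x l := hc.dist_triangle
      _ ≤ G.dist x l + (i + 1) := by have := hp.dist_getElem_le hc hi; omega
  · obtain ⟨w, hw⟩ := hc.exists_walk_length_eq_dist p[i] l
    exact hw ▸ hp.dist_add_le_length hl w i hi rfl

theorem not_dominated (hp : IsLeg G x p) {W : Set V} (hW : ∀ v ∈ p, v ∉ W) {i : ℕ}
    (hi : i < p.length) (h0 : i = 0 → x ∉ W) : ¬ Dominated G W p[i] := by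
  rintro ⟨w, hwW, rfl | hadj⟩
  · exact hW _ (List.getElem_mem hi) hwW
  · rcases hp.mem_or_eq_of_adj hi hadj.symm with hw | ⟨rfl, rfl⟩
    · exact hW w hw hwW
    · exact h0 rfl hwW

end IsLeg

theorem IsDetectionPair.exists_mem_of_isLeg [Fintype V] {G : SimpleGraph V}
    [DecidableRel G.Adj] (hc : G.Connected) {W L : Set V} (hWL : IsDetectionPair G W L)
    {x : V} {p q : List V} (hp : IsLeg G x p) (hq : IsLeg G x q) (hpq : p.Disjoint q) {i : ℕ}
    (hip : i < p.length) (hiq : i < q.length) (h0 : i = 0 → x ∉ W) :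
    (∃ v ∈ p, v ∈ W ∪ L) ∨ ∃ v ∈ q, v ∈ W ∪ L := by
  by_contra! h
  obtain ⟨hdp, hdq⟩ := h
  have hne : p[i] ≠ q[i] := fun h => hpq (List.getElem_mem hip) (h ▸ List.getElem_mem hiq)
  rcases hWL _ _ hne with hd | hd | ⟨l, hlL, hl⟩
  · exact hp.not_dominated (fun v hv hvW => hdp v hv (.inl hvW)) hip h0 hd
  · exact hq.not_dominated (fun v hv hvW => hdq v hv (.inl hvW)) hiq h0 hd
  · rw [hp.dist_getElem hc (fun h => hdp l h (.inr hlL)) hip,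
      hq.dist_getElem hc (fun h => hdq l h (.inr hlL)) hiq] at hl
    exact hl rfl

theorem IsDetectionPair.subsingleton_undetected [Fintype V] {G : SimpleGraph V}
    [DecidableRel G.Adj] (hc : G.Connected) {W L : Set V} (hWL : IsDetectionPair G W L)
    {x : V} {F : Set (List V)} {i : ℕ} (hF : ∀ p ∈ F, IsLeg G x p ∧ i < p.length)
    (hdisj : F.Pairwise List.Disjoint) (h0 : i = 0 → x ∉ W) :
    {p ∈ F | ¬ ∃ v ∈ p, v ∈ W ∪ L}.Subsingleton := by
  rintro p ⟨hpF, hp⟩ q ⟨hqF, hq⟩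
  by_contra hpq
  have := hWL.exists_mem_of_isLeg hc (hF p hpF).1 (hF q hqF).1 (hdisj hpF hqF hpq)
    (hF p hpF).2 (hF q hqF).2 h0
  exact this.elim hp hq

theorem pairwise_disjoint_union_image_singleton [Fintype V] {G : SimpleGraph V}
    [DecidableRel G.Adj] {x : V} {Legs : Set (List V)} {Lvs : Set V}
    (hLegs : ∀ p ∈ Legs, IsLeg G x p ∧ 2 ≤ p.length) (hdisj : Legs.Pairwise List.Disjoint)
    (hLvs : ∀ y ∈ Lvs, G.Adj x y ∧ G.degree y = 1) :
    (Legs ∪ (fun b => [b]) '' Lvs).Pairwise List.Disjoint := by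
  refine Set.pairwise_union.2 ⟨hdisj, Set.Pairwise.image fun a _ b _ hab => ?_, ?_⟩
  · simpa [Function.onFun] using Ne.symm hab
  · rintro p hp _ ⟨b, hb, rfl⟩ -
    have hbp := (hLegs p hp).1.not_mem_of_adj_of_degree_eq_one (hLegs p hp).2 (hLvs b hb).1
      (hLvs b hb).2
    exact ⟨List.disjoint_singleton.2 hbp, List.singleton_disjoint.2 hbp⟩

theorem stmt3_general [Fintype V] (G : SimpleGraph V) [DecidableRel G.Adj] (hc : G.Connected)
    (x : V)
    (Legs : Set (List V)) (Lvs : Set V)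
    (hLegs : ∀ p ∈ Legs, IsLeg G x p ∧ 2 ≤ p.length)
    (hdisj : Legs.Pairwise List.Disjoint)
    (hLvs : ∀ y ∈ Lvs, G.Adj x y ∧ G.degree y = 1)
    (W L : Set V) (hWL : IsDetectionPair G W L) :
    (x ∈ W → Legs.ncard - 1 ≤ {p ∈ Legs | ∃ v ∈ p, v ∈ W ∪ L}.ncard) ∧
    (x ∉ W → Lvs.ncard + Legs.ncard - 1 ≤
      {p ∈ Legs | ∃ v ∈ p, v ∈ W ∪ L}.ncard + (Lvs ∩ (W ∪ L)).ncard) := by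
  refine ⟨fun _ => Set.ncard_sub_one_le_ncard_sep
    (hWL.subsingleton_undetected hc (i := 1) hLegs hdisj (by omega)), fun hxW => ?_⟩
  set F := Legs ∪ (fun b => [b]) '' Lvs
  have hLegsFin : Legs.Finite := IsLeg.finite_setOf.subset fun p hp => (hLegs p hp).1
  have hcard : F.ncard = Legs.ncard + Lvs.ncard := by
    rw [Set.ncard_union_eq ?_ hLegsFin, Set.ncard_image_of_injective _ List.singleton_injective]
    refine Set.disjoint_left.2 fun p hp ⟨b, _, hb⟩ => ?_
    have := (hLegs p hp).2
    simp [← hb] at this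
  have hdet : {p ∈ F | ∃ v ∈ p, v ∈ W ∪ L} ⊆
      {p ∈ Legs | ∃ v ∈ p, v ∈ W ∪ L} ∪ (fun b => [b]) '' (Lvs ∩ (W ∪ L)) := by
    rintro p ⟨hp | ⟨b, hb, rfl⟩, hpWL⟩
    · exact .inl ⟨hp, hpWL⟩
    · exact .inr ⟨b, ⟨hb, by simpa using hpWL⟩, rfl⟩
  have hF : ∀ p ∈ F, IsLeg G x p ∧ 0 < p.length := by
    rintro p (hp | ⟨b, hb, rfl⟩)
    · exact ⟨(hLegs p hp).1, by have := (hLegs p hp).2; omega⟩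
    · exact ⟨IsLeg.singleton (hLvs b hb).1 (hLvs b hb).2, by simp⟩
  have hundet := hWL.subsingleton_undetected hc hF
    (pairwise_disjoint_union_image_singleton hLegs hdisj hLvs) fun _ => hxW
  have := (Set.ncard_sub_one_le_ncard_sep hundet).trans
    ((Set.ncard_le_ncard hdet ((hLegsFin.subset (Set.sep_subset _ _)).union
      (Set.toFinite _))).trans (Set.ncard_union_le _ _))
  rw [Set.ncard_image_of_injective _ List.singleton_injective] at this
  omega

/-- Lemma on legs of a special branching point: if `x` carries a watcher, at least
ℓ − 1 of the legs of length ≥ 2 contain a detector; otherwise at least t + ℓ − 1 of the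
legs attached to `x` (counting leaf neighbours as legs of length 1) contain a detector. -/
theorem stmt3 [Fintype V] (G : SimpleGraph V) [DecidableRel G.Adj] (hc : G.Connected)
    (x : V) (hx : IsSpecialBranchingPoint G x)
    (Legs : Set (List V)) (Lvs : Set V)
    (hLegs : ∀ p ∈ Legs, IsLeg G x p ∧ 2 ≤ p.length)
    (hdisj : Legs.Pairwise List.Disjoint)
    (hLvs : ∀ y ∈ Lvs, G.Adj x y ∧ G.degree y = 1)
    (W L : Set V) (hWL : IsDetectionPair G W L) :
    (x ∈ W → Legs.ncard - 1 ≤ {p ∈ Legs | ∃ v ∈ p, v ∈ W ∪ L}.ncard) ∧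
    (x ∉ W → Lvs.ncard + Legs.ncard - 1 ≤
      {p ∈ Legs | ∃ v ∈ p, v ∈ W ∪ L}.ncard + (Lvs ∩ (W ∪ L)).ncard) :=
  stmt3_general G hc x Legs Lvs hLegs hdisj hLvs W L hWL

end DetPair
end

section
/- Let G be a graph with a special branching point x having a leg attached whose leaf is y. If (W,L) is a detection pair of G with x ∈ L, then (W, (L \ {x}) ∪ {y}) is also a detection pair of G. -/
/-!
Let the leg be `x – p₀ – ⋯ – pₖ₋₁ = y`. Its inner vertices have degree 2 and `y` is a leaf, so
a shortest path from a vertex `u` off the leg can only enter it through `x`: by induction along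
the leg, `d(u, pⱼ) = d(u, x) + j + 1`, in particular `d(u, y) = d(u, x) + k`. On the leg,
`d(pⱼ, y) = k - 1 - j < k`. Hence `d(·, y)` determines `d(·, x)`: two vertices at the same
distance from `y` are either equal or both off the leg, where the two distances differ by the
constant `k`. So every pair separated by the listener `x` is separated by `y`.
-/

open SimpleGraph

namespace SimpleGraph

variable {V : Type*} {G : SimpleGraph V}

lemma Reachable.exists_adj_dist_eq_add_one {u v : V} (hr : G.Reachable u v) (hne : u ≠ v) :
    ∃ w, G.Adj w v ∧ G.dist u v = G.dist u w + 1 := by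
  obtain ⟨q, hq⟩ := hr.symm.exists_walk_length_eq_dist
  cases q with
  | nil => exact absurd rfl hne
  | cons hadj q =>
    rename_i w
    refine ⟨w, hadj.symm, le_antisymm ?_ ?_⟩
    · have : G.dist w v = 1 := dist_eq_one_iff_adj.mpr hadj.symm
      have := hadj.symm.reachable.dist_triangle_right u
      omega
    · have := dist_le q
      rw [Walk.length_cons, SimpleGraph.dist_comm] at hq
      rw [SimpleGraph.dist_comm (u := u)]
      omega

lemma Reachable.dist_eq_dist_add_one_of_forall_adj_ne {u a x : V} (hr : G.Reachable u a)
    (hne : u ≠ a) (hfar : ∀ w, G.Adj w a → w ≠ x → G.dist u a ≤ G.dist u w) :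
    G.dist u a = G.dist u x + 1 := by
  obtain ⟨w, hwa, hw⟩ := hr.exists_adj_dist_eq_add_one hne
  by_cases hwx : w = x
  · rwa [← hwx]
  · have := hfar w hwa hwx
    omega

section Degree

variable {a x w : V} [Fintype (G.neighborSet a)]

lemma eq_of_adj_of_degree_eq_one_s4 (h : G.degree a = 1) (hx : G.Adj x a) (hw : G.Adj w a) :
    w = x := by
  obtain ⟨c, -, hc⟩ := degree_eq_one_iff_existsUnique_adj.mp h
  rw [hc w hw.symm, hc x hx.symm]

lemma eq_or_eq_of_adj_of_degree_eq_two_s4 {b : V} (h : G.degree a = 2) (hx : G.Adj x a)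
    (hb : G.Adj b a) (hxb : x ≠ b) (hw : G.Adj w a) : w = x ∨ w = b := by
  classical
  rw [← card_neighborFinset_eq_degree, Finset.card_eq_two] at h
  obtain ⟨c, d, -, hN⟩ := h
  have hmem : ∀ v, G.Adj v a → v = c ∨ v = d := fun v hv => by
    simpa [hN] using (mem_neighborFinset G a v).mpr hv.symm
  grind

end Degree

end SimpleGraph

namespace DetPair

variable {V : Type*}

lemma IsDetectionPair.insert_diff_singleton {G : SimpleGraph V} {W L : Set V} {x y : V}
    (h : IsDetectionPair G W L) (hxy : ∀ u v, G.dist u y = G.dist v y → G.dist u x = G.dist v x) :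
    IsDetectionPair G W (insert y (L \ {x})) := by
  intro u v huv
  rcases h u v huv with hu | hv | ⟨l, hl, hdist⟩
  · exact .inl hu
  · exact .inr (.inl hv)
  refine .inr (.inr ?_)
  by_cases hlx : l = x
  · subst hlx
    exact ⟨y, Set.mem_insert _ _, fun hy => hdist (hxy u v hy)⟩
  · exact ⟨l, Set.mem_insert_of_mem _ ⟨hl, hlx⟩, hdist⟩

section Leg

variable [Fintype V] {G : SimpleGraph V} [DecidableRel G.Adj]

lemma IsLeg.tail {x a b : V} {l : List V} (h : IsLeg G x (a :: b :: l)) :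
    IsLeg G a (b :: l) := by
  obtain ⟨-, hnd, -, hchain, ⟨y, hy, hdy⟩, hdeg⟩ := h
  rw [List.Chain, List.isChain_cons_cons] at hchain
  refine ⟨List.cons_ne_nil _ _, (List.nodup_cons.mp hnd).2, (List.nodup_cons.mp hnd).1,
    hchain.2, ⟨y, by simpa using hy, hdy⟩, fun v hv => hdeg v ?_⟩
  rw [List.dropLast_cons_cons]
  exact List.mem_cons_of_mem _ hv

lemma IsLeg.adj_head {x a : V} {l : List V} (h : IsLeg G x (a :: l)) : G.Adj x a := by
  have := h.2.2.2.1
  rw [List.Chain, List.isChain_cons] at this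
  simpa using this.1

lemma IsLeg.dist_getElem_s4 (hc : G.Connected) {x : V} {p : List V} (hp : IsLeg G x p) {u : V}
    (hu : u ∉ p) (j : ℕ) (hj : j < p.length) : G.dist u p[j] = G.dist u x + (j + 1) := by
  induction p generalizing x j with
  | nil => simp at hj
  | cons a l ih =>
    have hua : u ≠ a := fun h => hu (h ▸ List.mem_cons_self)
    rcases l with _ | ⟨b, l⟩
    · obtain rfl : j = 0 := by simpa using hj
      obtain ⟨y, hy, hdy⟩ := hp.2.2.2.2.1
      obtain rfl : a = y := by simpa using hy
      simpa using (hc u a).dist_eq_dist_add_one_of_forall_adj_ne hua fun w hwa hwx =>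
        absurd (eq_of_adj_of_degree_eq_one_s4 hdy hp.adj_head hwa) hwx
    · have htail := ih hp.tail (fun h => hu (List.mem_cons_of_mem _ h))
      have hdeg : G.degree a = 2 := hp.2.2.2.2.2 a (by simp [List.dropLast_cons_cons])
      have hxb : x ≠ b := fun h => hp.2.2.1 (h ▸ by simp)
      have hfirst : G.dist u a = G.dist u x + 1 :=
        (hc u a).dist_eq_dist_add_one_of_forall_adj_ne hua fun w hwa hwx => by
          obtain rfl := (eq_or_eq_of_adj_of_degree_eq_two_s4 hdeg hp.adj_head hp.tail.adj_head.symm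
            hxb hwa).resolve_left hwx
          have := htail 0 (by simp)
          simp only [List.getElem_cons_zero] at this
          omega
      cases j with
      | zero => simpa using hfirst
      | succ j =>
        rw [List.getElem_cons_succ, htail j (by simpa using hj), hfirst]
        ring

lemma IsLeg.dist_getLast (hc : G.Connected) {x y : V} {p : List V} (hp : IsLeg G x p)
    (hy : p.getLast? = some y) {u : V} (hu : u ∉ p) : G.dist u y = G.dist u x + p.length := by
  have hlen : 0 < p.length := List.length_pos_iff.mpr hp.1
  obtain ⟨hlast, rfl⟩ := List.getElem?_eq_some_iff.mp (List.getLast?_eq_getElem? ▸ hy)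
  rw [hp.dist_getElem_s4 hc hu]
  omega

lemma IsLeg.getElem_dist_getLast (hc : G.Connected) {x y : V} {p : List V} (hp : IsLeg G x p)
    (hy : p.getLast? = some y) (j : ℕ) (hj : j < p.length) : G.dist p[j] y = p.length - 1 - j := by
  induction p generalizing x j with
  | nil => simp at hj
  | cons a l ih =>
    rcases l with _ | ⟨b, l⟩
    · obtain rfl : j = 0 := by simpa using hj
      obtain rfl : a = y := by simpa using hy
      simp
    · have hy' : (b :: l).getLast? = some y := by simpa using hy
      cases j with
      | zero =>
        simpa using hp.tail.dist_getLast hc hy' (List.nodup_cons.mp hp.2.1).1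
      | succ j =>
        rw [List.getElem_cons_succ, ih hp.tail hy' j (by simpa using hj)]
        simp only [List.length_cons]
        omega

lemma IsLeg.eq_of_mem_of_dist_getLast_eq (hc : G.Connected) {x y : V} {p : List V}
    (hp : IsLeg G x p) (hy : p.getLast? = some y) {u v : V} (hu : u ∈ p)
    (huv : G.dist u y = G.dist v y) : u = v := by
  obtain ⟨i, hi, rfl⟩ := List.getElem_of_mem hu
  have hui := hp.getElem_dist_getLast hc hy i hi
  by_cases hv : v ∈ p
  · obtain ⟨j, hj, rfl⟩ := List.getElem_of_mem hv
    have hvj := hp.getElem_dist_getLast hc hy j hj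
    obtain rfl : i = j := by omega
    rfl
  · have := hp.dist_getLast hc hy hv
    omega

lemma IsLeg.dist_eq_of_dist_getLast_eq (hc : G.Connected) {x y : V} {p : List V}
    (hp : IsLeg G x p) (hy : p.getLast? = some y) {u v : V} (huv : G.dist u y = G.dist v y) :
    G.dist u x = G.dist v x := by
  by_cases hu : u ∈ p
  · rw [hp.eq_of_mem_of_dist_getLast_eq hc hy hu huv]
  by_cases hv : v ∈ p
  · rw [hp.eq_of_mem_of_dist_getLast_eq hc hy hv huv.symm]
  have := hp.dist_getLast hc hy hu
  have := hp.dist_getLast hc hy hv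
  omega

end Leg

theorem stmt4_general [Fintype V] (G : SimpleGraph V) [DecidableRel G.Adj] (hc : G.Connected)
    (x : V) (p : List V) (hp : IsLeg G x p) (y : V) (hy : p.getLast? = some y)
    (W L : Set V) (h : IsDetectionPair G W L) :
    IsDetectionPair G W (insert y (L \ {x})) :=
  h.insert_diff_singleton fun _ _ => hp.dist_eq_of_dist_getLast_eq hc hy

/-- Moving a listener from a special branching point `x` to the leaf `y` of a leg
attached to `x` keeps a detection pair. -/
theorem stmt4 [Fintype V] (G : SimpleGraph V) [DecidableRel G.Adj] (hc : G.Connected)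
    (x : V) (hdeg : 3 ≤ G.degree x)
    (p : List V) (hp : IsLeg G x p) (y : V) (hy : p.getLast? = some y)
    (W L : Set V) (h : IsDetectionPair G W L) (hx : x ∈ L) :
    IsDetectionPair G W (insert y (L \ {x})) :=
  stmt4_general G hc x p hp y hy W L h

end DetPair
end

section
/- Let T be a tree and let x be a special branching point with t leaf neighbours and ℓ legs of length at least 2 attached, with t + ℓ ≥ 2 and ℓ ≤ 1. Then any detection pair of T contains at least one detector in V_x = {x} ∪ (leaf neighbours of x) ∪ (vertices of legs of length ≥ 2 attached to x). -/
/-!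
A leaf neighbour of `x` is a leg of length one, so at least two legs are attached to `x`, and
they start at distinct neighbours `u`, `v` of `x` because a leg is determined by its first vertex.
Every path leaving a leg passes through `x`, so every vertex off the two legs is one step farther
from `u` and from `v` than from `x`, and only `x` and vertices of the two legs dominate `u` or
`v`. Without a detector in `V_x`, the pair `u`, `v` is therefore neither dominated nor separated.
-/

open SimpleGraph

namespace DetPair

variable {V : Type*}

section Degree

variable [Fintype V] {G : SimpleGraph V} [DecidableRel G.Adj]

lemma eq_of_adj_of_degree_eq_one {a b c : V} (h : G.degree a = 1) (hb : G.Adj a b)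
    (hc : G.Adj a c) : c = b :=
  (degree_eq_one_iff_existsUnique_adj.mp h).unique hc hb

lemma eq_or_eq_of_adj_of_degree_eq_two {a b c d : V} (h : G.degree a = 2) (hb : G.Adj a b)
    (hc : G.Adj a c) (hbc : b ≠ c) (hd : G.Adj a d) : d = b ∨ d = c := by
  classical
  have hnbhd : {b, c} = G.neighborFinset a :=
    Finset.eq_of_subset_of_card_le (by simp [Finset.insert_subset_iff, hb, hc])
      (by rw [card_neighborFinset_eq_degree, h, Finset.card_pair hbc])
  simpa [← hnbhd] using (G.mem_neighborFinset a d).mpr hd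

end Degree

/-- Every path from `P` to a vertex outside `P ∪ {x}` passes through `x`. -/
def IsPendantAt (G : SimpleGraph V) (x : V) (P : Set V) : Prop :=
  x ∉ P ∧ ∀ a ∈ P, ∀ b, G.Adj a b → b = x ∨ b ∈ P

namespace IsPendantAt

variable {G : SimpleGraph V} {x u l : V} {P : Set V}

lemma dist_lt_length (hP : IsPendantAt G x P) (hu : u ∈ P) (hl : l ∉ P) (w : G.Walk u l) :
    G.dist x l < w.length := by
  induction w with
  | nil => exact absurd hu hl
  | @cons u b l hub w ih =>
    rw [Walk.length_cons]
    rcases hP.2 u hu b hub with rfl | hb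
    · exact Nat.lt_succ_of_le (dist_le w)
    · exact (ih hb hl).trans (Nat.lt_succ_self _)

lemma dist_eq (hG : G.Connected) (hP : IsPendantAt G x P) (hxu : G.Adj x u) (hu : u ∈ P)
    (hl : l ∉ P) : G.dist u l = G.dist x l + 1 := by
  obtain ⟨w, hw⟩ := (hG u l).exists_walk_length_eq_dist
  have hlower : G.dist x l < G.dist u l := hw ▸ hP.dist_lt_length hu hl w
  have hupper : G.dist u l ≤ G.dist u x + G.dist x l := hG.dist_triangle
  rw [dist_eq_one_iff_adj.mpr hxu.symm] at hupper
  omega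

lemma exists_mem_of_dominated {W : Set V} (hP : IsPendantAt G x P) (hu : u ∈ P)
    (hdom : Dominated G W u) : ∃ w ∈ W, w = x ∨ w ∈ P := by
  obtain ⟨w, hwW, rfl | hwu⟩ := hdom
  · exact ⟨w, hwW, Or.inr hu⟩
  · exact ⟨w, hwW, hP.2 u hu w hwu.symm⟩

end IsPendantAt

lemma exists_detector_of_isPendantAt {G : SimpleGraph V} (hG : G.Connected) {W L : Set V}
    (h : IsDetectionPair G W L) {x u v : V} {P Q : Set V} (hP : IsPendantAt G x P)
    (hQ : IsPendantAt G x Q) (hxu : G.Adj x u) (hxv : G.Adj x v) (hu : u ∈ P) (hv : v ∈ Q)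
    (huv : u ≠ v) : ∃ d ∈ W ∪ L, d = x ∨ d ∈ P ∨ d ∈ Q := by
  rcases h u v huv with hdom | hdom | ⟨l, hlL, hdist⟩
  · obtain ⟨w, hwW, hw⟩ := hP.exists_mem_of_dominated hu hdom
    exact ⟨w, Or.inl hwW, hw.imp_right Or.inl⟩
  · obtain ⟨w, hwW, hw⟩ := hQ.exists_mem_of_dominated hv hdom
    exact ⟨w, Or.inl hwW, hw.imp_right Or.inr⟩
  · by_contra! hno
    obtain ⟨-, hlP, hlQ⟩ := hno l (Or.inr hlL)
    exact hdist ((hP.dist_eq hG hxu hu hlP).trans (hQ.dist_eq hG hxv hv hlQ).symm)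

namespace IsLeg

variable [Fintype V] {G : SimpleGraph V} [DecidableRel G.Adj] {x a b : V} {p : List V}

lemma adj_head_s11 (hp : IsLeg G x (a :: p)) : G.Adj x a :=
  (List.isChain_cons_cons.mp hp.2.2.2.1).1

lemma tail_s11 (hp : IsLeg G x (a :: b :: p)) : IsLeg G a (b :: p) := by
  obtain ⟨-, hnd, -, hch, ⟨y, hy, hdeg⟩, hdeg2⟩ := hp
  refine ⟨List.cons_ne_nil _ _, hnd.of_cons, (List.nodup_cons.mp hnd).1,
    (List.isChain_cons_cons.mp hch).2, ⟨y, by simpa using hy, hdeg⟩, ?_⟩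
  intro v hv
  exact hdeg2 v (by simp_all)

lemma degree_eq_one_of_singleton (hp : IsLeg G x [a]) : G.degree a = 1 := by
  obtain ⟨-, -, -, -, ⟨y, hy, hdeg⟩, -⟩ := hp
  obtain rfl : a = y := by simpa using hy
  exact hdeg

lemma degree_head_eq_two (hp : IsLeg G x (a :: b :: p)) : G.degree a = 2 :=
  hp.2.2.2.2.2 a (by simp)

lemma isPendantAt (hp : IsLeg G x p) : IsPendantAt G x {v | v ∈ p} := by
  refine ⟨hp.2.2.1, ?_⟩
  induction p generalizing x with
  | nil => simp
  | cons a p ih =>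
    intro v hv c hvc
    match p, hp with
    | [], hp =>
      obtain rfl : v = a := by simpa using hv
      exact Or.inl (eq_of_adj_of_degree_eq_one hp.degree_eq_one_of_singleton hp.adj_head_s11.symm hvc)
    | b :: p, hp =>
      rcases List.mem_cons.mp hv with rfl | hv
      · have hxb : x ≠ b := fun hxb => hp.2.2.1 (by simp [hxb])
        rcases eq_or_eq_of_adj_of_degree_eq_two hp.degree_head_eq_two hp.adj_head_s11.symm
          hp.tail_s11.adj_head_s11 hxb hvc with rfl | rfl
        · exact Or.inl rfl
        · exact Or.inr (by simp)
      · rcases ih hp.tail_s11 v hv c hvc with rfl | hc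
        · exact Or.inr (by simp)
        · exact Or.inr (List.mem_cons_of_mem _ hc)

lemma eq_of_head_eq {q : List V} (hp : IsLeg G x (a :: p)) (hq : IsLeg G x (a :: q)) :
    p = q := by
  induction p generalizing x a q with
  | nil =>
    cases q with
    | nil => rfl
    | cons => simpa [hp.degree_eq_one_of_singleton] using hq.degree_head_eq_two
  | cons b p ih =>
    cases q with
    | nil => simpa [hq.degree_eq_one_of_singleton] using hp.degree_head_eq_two
    | cons c q =>
      have hxb : x ≠ b := fun hxb => hp.2.2.1 (by simp [hxb])
      have hxc : c ≠ x := fun hxc => hq.2.2.1 (by simp [hxc])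
      obtain rfl : c = b :=
        (eq_or_eq_of_adj_of_degree_eq_two hp.degree_head_eq_two hp.adj_head_s11.symm
          hp.tail_s11.adj_head_s11 hxb hq.tail_s11.adj_head_s11).resolve_left hxc
      rw [ih hp.tail_s11 hq.tail_s11]

end IsLeg

lemma isLeg_singleton [Fintype V] {G : SimpleGraph V} [DecidableRel G.Adj] {x y : V}
    (hxy : G.Adj x y) (hy : G.degree y = 1) : IsLeg G x [y] :=
  ⟨List.cons_ne_nil _ _, List.nodup_singleton y, by simpa using hxy.ne,
    List.isChain_cons_cons.mpr ⟨hxy, List.IsChain.singleton y⟩, ⟨y, rfl, hy⟩, by simp⟩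

lemma exists_detector_of_isLeg [Fintype V] {G : SimpleGraph V} [DecidableRel G.Adj]
    (hG : G.Connected) {W L : Set V} (h : IsDetectionPair G W L) {x : V} {p q : List V}
    (hp : IsLeg G x p) (hq : IsLeg G x q) (hpq : p ≠ q) : ∃ d ∈ W ∪ L, d = x ∨ d ∈ p ∨ d ∈ q := by
  obtain ⟨a, p, rfl⟩ := List.exists_cons_of_ne_nil hp.1
  obtain ⟨b, q, rfl⟩ := List.exists_cons_of_ne_nil hq.1
  have hab : a ≠ b := by
    rintro rfl
    exact hpq (congrArg _ (hp.eq_of_head_eq hq))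
  exact exists_detector_of_isPendantAt hG h hp.isPendantAt hq.isPendantAt hp.adj_head_s11
    hq.adj_head_s11 List.mem_cons_self List.mem_cons_self hab

theorem stmt11_general [Fintype V] (G : SimpleGraph V) [DecidableRel G.Adj] (hT : G.IsTree)
    (x : V)
    (Legs : Set (List V)) (Lvs : Set V)
    (hLegs : ∀ p ∈ Legs, IsLeg G x p ∧ 2 ≤ p.length)
    (hLvs : ∀ y ∈ Lvs, G.Adj x y ∧ G.degree y = 1)
    (ht : 2 ≤ Lvs.ncard + Legs.ncard)
    (W L : Set V) (h : IsDetectionPair G W L) :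
    ∃ d ∈ W ∪ L, d = x ∨ d ∈ Lvs ∨ ∃ p ∈ Legs, d ∈ p := by
  -- a leaf neighbour `y` is the leg `[y]`
  set allLegs : Set (List V) := (fun y => [y]) '' Lvs ∪ Legs
  have hallLegs : ∀ p ∈ allLegs, IsLeg G x p := by
    rintro p (⟨y, hy, rfl⟩ | hp)
    · exact isLeg_singleton (hLvs y hy).1 (hLvs y hy).2
    · exact (hLegs p hp).1
  -- `encard` rather than `ncard`, which is `0` on infinite sets
  have hcard : allLegs.encard = Lvs.encard + Legs.encard := by
    rw [Set.encard_union_eq, List.singleton_injective.encard_image]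
    refine Set.disjoint_left.mpr ?_
    rintro _ ⟨y, -, rfl⟩ hy
    simpa using (hLegs _ hy).2
  have htwo : 1 < allLegs.encard :=
    calc 1 < ((Lvs.ncard + Legs.ncard : ℕ) : ℕ∞) := by norm_cast
      _ ≤ Lvs.encard + Legs.encard := by
        rw [Nat.cast_add]; exact add_le_add (Set.ncard_le_encard _) (Set.ncard_le_encard _)
      _ = allLegs.encard := hcard.symm
  have hmem : ∀ p ∈ allLegs, ∀ d ∈ p, d ∈ Lvs ∨ ∃ p ∈ Legs, d ∈ p := by
    rintro p (⟨y, hy, rfl⟩ | hp) d hd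
    · exact Or.inl (by simpa [List.mem_singleton.mp hd] using hy)
    · exact Or.inr ⟨p, hp, hd⟩
  obtain ⟨p, hp, q, hq, hpq⟩ := Set.one_lt_encard_iff_nontrivial.mp htwo
  obtain ⟨d, hd, rfl | hdp | hdq⟩ :=
    exists_detector_of_isLeg hT.connected h (hallLegs p hp) (hallLegs q hq) hpq
  · exact ⟨d, hd, Or.inl rfl⟩
  · exact ⟨d, hd, Or.inr (hmem p hp d hdp)⟩
  · exact ⟨d, hd, Or.inr (hmem q hq d hdq)⟩

/-- Case ℓ ≤ 1 of Lemma 9: if a special branching point `x` of a tree has `t` leaf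
neighbours and ℓ ≤ 1 legs of length ≥ 2 with t + ℓ ≥ 2, then every detection pair has a
detector in V_x = {x} ∪ (leaf neighbours) ∪ (vertices of the legs of length ≥ 2). -/
theorem stmt11 [Fintype V] (G : SimpleGraph V) [DecidableRel G.Adj] (hT : G.IsTree)
    (x : V) (hx : IsSpecialBranchingPoint G x)
    (Legs : Set (List V)) (Lvs : Set V)
    (hLegs : ∀ p ∈ Legs, IsLeg G x p ∧ 2 ≤ p.length)
    (hLvs : ∀ y ∈ Lvs, G.Adj x y ∧ G.degree y = 1)
    (hl : Legs.ncard ≤ 1) (ht : 2 ≤ Lvs.ncard + Legs.ncard)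
    (W L : Set V) (h : IsDetectionPair G W L) :
    ∃ d ∈ W ∪ L, d = x ∨ d ∈ Lvs ∨ ∃ p ∈ Legs, d ∈ p :=
  stmt11_general G hT x Legs Lvs hLegs hLvs ht W L h

end DetPair
end

section
/- Let T be a tree, x ∈ V(T), and T_x a subtree of T containing x such that every vertex of T_x except x has the same degree in T_x as in T. Suppose (W,L) is a detection pair of T such that no vertex of T_x − x is a listener, and let P_i denote the set of vertices of T_x at distance i from x. Then for every i and every two distinct vertices u,v ∈ P_i, at least one of u,v is dominated by a watcher of W. -/
open SimpleGraph

namespace DetPair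

variable {V : Type*}

/-! Every walk leaving `T_x` passes through `x`, so a listener `l` outside `T_x − x` sees each
`u ∈ T_x` at distance `d(u, x) + d(x, l)`; two vertices at the same distance from `x` thus look
alike to every listener, and the detection property forces one of them to be dominated. -/

section HangingSet

variable {G : SimpleGraph V} {x : V} {S : Set V}

theorem Walk.mem_support_of_mem_of_notMem (hS : ∀ v ∈ S, v ≠ x → ∀ w, G.Adj v w → w ∈ S)
    {u l : V} (p : G.Walk u l) (hu : u ∈ S) (hl : l ∉ S) : x ∈ p.support := by
  induction p with
  | nil => exact absurd hu hl
  | @cons a b _ hab q ih =>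
    by_cases hax : a = x
    · simp [hax]
    · exact List.mem_cons_of_mem _ (ih (hS a hu hax b hab) hl)

theorem dist_eq_dist_add_dist_of_mem_of_notMem (hG : G.Connected)
    (hS : ∀ v ∈ S, v ≠ x → ∀ w, G.Adj v w → w ∈ S)
    {u l : V} (hu : u ∈ S) (hl : l ∉ S) :
    G.dist u l = G.dist u x + G.dist x l := by
  classical
  refine le_antisymm hG.dist_triangle ?_
  obtain ⟨p, hp⟩ := hG.exists_walk_length_eq_dist u l
  have hx := Walk.mem_support_of_mem_of_notMem hS p hu hl
  calc G.dist u x + G.dist x l ≤ (p.takeUntil x hx).length + (p.dropUntil x hx).length :=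
        Nat.add_le_add (dist_le _) (dist_le _)
    _ = G.dist u l := by rw [← Walk.length_append, Walk.take_spec, hp]

theorem dist_eq_dist_of_dist_eq (hG : G.Connected)
    (hS : ∀ v ∈ S, v ≠ x → ∀ w, G.Adj v w → w ∈ S)
    {u v l : V} (hu : u ∈ S) (hv : v ∈ S) (huv : G.dist x u = G.dist x v)
    (hl : l ∈ S → l = x) :
    G.dist u l = G.dist v l := by
  by_cases hlS : l ∈ S
  · rw [hl hlS, G.dist_comm, huv, G.dist_comm]
  · rw [dist_eq_dist_add_dist_of_mem_of_notMem hG hS hu hlS,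
      dist_eq_dist_add_dist_of_mem_of_notMem hG hS hv hlS, G.dist_comm (u := u), huv,
      G.dist_comm (u := x)]

end HangingSet

theorem stmt13_general (G : SimpleGraph V) (hT : G.IsTree)
    (x : V) (Tx : Set V)
    (hfull : ∀ v ∈ Tx, v ≠ x → ∀ w, G.Adj v w → w ∈ Tx)
    (W L : Set V) (h : IsDetectionPair G W L)
    (hnoL : ∀ l ∈ L, l ∈ Tx → l = x) :
    ∀ i : ℕ, ∀ u ∈ Tx, ∀ v ∈ Tx, u ≠ v →
      G.dist x u = i → G.dist x v = i →
      Dominated G W u ∨ Dominated G W v := by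
  intro i u hu v hv huv hdu hdv
  rcases h u v huv with hdom | hdom | ⟨l, hlL, hne⟩
  · exact Or.inl hdom
  · exact Or.inr hdom
  · exact absurd (dist_eq_dist_of_dist_eq hT.1 hfull hu hv (hdu.trans hdv.symm)
      (hnoL l hlL)) hne

/-- If the subtree `T_x` hangs from `x` (all its vertices except `x` keep their full
degree) and a detection pair has no listener in `T_x − x`, then among any two distinct
vertices of `T_x` at the same distance from `x`, one must be dominated by a watcher. -/
theorem stmt13 (G : SimpleGraph V) (hT : G.IsTree)
    (x : V) (Tx : Set V) (hxT : x ∈ Tx)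
    (hconn : (G.induce Tx).Connected)
    (hfull : ∀ v ∈ Tx, v ≠ x → ∀ w, G.Adj v w → w ∈ Tx)
    (W L : Set V) (h : IsDetectionPair G W L)
    (hnoL : ∀ l ∈ L, l ∈ Tx → l = x) :
    ∀ i : ℕ, ∀ u ∈ Tx, ∀ v ∈ Tx, u ≠ v →
      G.dist x u = i → G.dist x v = i →
      Dominated G W u ∨ Dominated G W v :=
  stmt13_general G hT x Tx hfull W L h hnoL

end DetPair
end

section
/- Let T be a tree with n ≥ 2 vertices. Then T has a detection pair of size at most 2·DP(T) of the form (S, R), where S is the set of t-stems of T with t ≥ 3 and R is an optimal resolving set of the tree T′ obtained from T by deleting, at each such stem with t leaf neighbours and ℓ legs of length ≥ 2 attached: t−2 leaf neighbours if ℓ = 0, t−1 leaf neighbours if ℓ = 1, and all t leaf neighbours if ℓ ≥ 2. -/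
/-!
Deleted leaves are dominated by their stems in `S`, and deleting leaves does not change distances,
so `R` separates all other pairs and `(S, R)` is a detection pair.

For the bound, take an optimal detection pair `(W, L)`. Every stem in `S` has a watcher or
listener among itself and its leaves; this charges `S` together with the set `W₂` of watchers
outside `S` having two kept leaves injectively into `W ∪ L`. Moving listeners off deleted leaves
onto their stems, replacing each watcher by one of its kept leaves and adding a second kept leaf
for each vertex of `W₂` gives at most `|L| + |W| + |W₂|` vertices that resolve `T′`. Indeed, two
vertices of `T′` they fail to separate must be neighbours of a watcher `w` whose branches through
them contain no watcher or listener; such branches are legs, and the number of leaves kept at `w`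
contradicts the deletion rule. Hence `|S| + MD(T′) ≤ 2 (|W| + |L|) = 2 DP(T)`.
-/

open SimpleGraph

namespace SimpleGraph

variable {V : Type*} {G : SimpleGraph V}

theorem IsTree.length_eq_dist (hT : G.IsTree) {x y : V} {p : G.Walk x y} (hp : p.IsPath) :
    p.length = G.dist x y := by
  obtain ⟨q, hq, hql⟩ := hT.connected.exists_path_of_dist x y
  rw [← hql, (hT.existsUnique_path x y).unique hp hq]

theorem IsTree.dist_eq_add_of_mem_support (hT : G.IsTree) {x y v : V} {p : G.Walk x y}
    (hp : p.IsPath) (hv : v ∈ p.support) : G.dist x y = G.dist x v + G.dist v y := by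
  classical
  rw [← hT.length_eq_dist hp, ← hT.length_eq_dist (hp.takeUntil hv),
    ← hT.length_eq_dist (hp.dropUntil hv), ← Walk.length_append, p.take_spec hv]

theorem Connected.dist_eq_add_one_of_degree_eq_one [Fintype V] [DecidableRel G.Adj]
    (hG : G.Connected) {u x z : V} (hu : G.degree u = 1) (hux : G.Adj u x) (hz : z ≠ u) :
    G.dist z u = G.dist z x + 1 := by
  obtain ⟨p, hp⟩ := hG.exists_walk_length_eq_dist u z
  cases p with
  | nil => exact absurd rfl hz
  | cons h q =>
    obtain rfl := (degree_eq_one_iff_existsUnique_adj.1 hu).unique hux h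
    have hle : G.dist z x ≤ q.length := dist_comm (u := z) ▸ dist_le q
    have htri : G.dist z u ≤ G.dist z x + G.dist x u := hG.dist_triangle
    rw [Walk.length_cons, dist_comm] at hp
    rw [dist_eq_one_iff_adj.2 hux.symm] at htri
    omega

theorem Connected.eq_of_forall_dist_eq (hG : G.Connected) {R : Set V} {a b : V}
    (h : ∀ r ∈ R, G.dist a r = G.dist b r) (ha : a ∈ R) : a = b := by
  have := h a ha
  rw [dist_self, eq_comm, hG.dist_eq_zero_iff] at this
  exact this.symm

theorem Connected.dist_induce (hG : G.Connected) {s : Set V}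
    (hs : ∀ v ∉ s, (G.neighborSet v).Subsingleton) (x y : s) :
    (G.induce s).dist x y = G.dist x y := by
  obtain ⟨p, hp, hpl⟩ := hG.exists_path_of_dist x y
  have hsupp : ∀ v ∈ p.support, v ∈ s := fun v hv => by
    by_contra hvs
    exact hp.isTrail.not_mem_support_of_subsingleton_neighborSet (by rintro rfl; exact hvs x.2)
      (by rintro rfl; exact hvs y.2) (hs v hvs) hv
  have hq : (p.induce s hsupp).length = p.length := by
    rw [← Walk.length_map (Embedding.induce s).toHom]
    exact congrArg Walk.length (Walk.map_induce p hsupp)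
  apply le_antisymm
  · exact hpl ▸ hq ▸ dist_le _
  · obtain ⟨r, hr⟩ := (p.induce s hsupp).reachable.exists_walk_length_eq_dist
    rw [← hr, ← Walk.length_map (Embedding.induce s).toHom]
    exact dist_le _

/-- For an edge `wa` of a tree, the vertices on the `a`-side of it, i.e. the component of `a`
in `G - wa`. -/
def branch (G : SimpleGraph V) (w a : V) : Set V :=
  {z | G.dist z w = G.dist z a + 1}

section Branch

variable {w a b y z : V}

theorem mem_branch_self (hwa : G.Adj w a) : a ∈ G.branch w a := by
  simp [branch, dist_eq_one_iff_adj.2 hwa.symm]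

theorem notMem_branch_left : w ∉ G.branch w a := by
  simp [branch]

theorem IsTree.notMem_branch_iff (hT : G.IsTree) (hwa : G.Adj w a) :
    z ∉ G.branch w a ↔ G.dist z a = G.dist z w + 1 := by
  have := hT.dist_eq_dist_add_one_of_adj z hwa
  simp only [branch, Set.mem_ofPred_eq]
  omega

theorem IsTree.eq_of_mem_branch_of_adj (hT : G.IsTree) (hz : z ∈ G.branch w a)
    (hwz : G.Adj w z) : z = a := by
  have hz : G.dist z w = G.dist z a + 1 := hz
  rw [dist_eq_one_iff_adj.2 hwz.symm] at hz
  exact hT.connected.dist_eq_zero_iff.1 (by omega)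

theorem IsTree.mem_branch_of_adj (hT : G.IsTree) (hwa : G.Adj w a) (hz : z ∈ G.branch w a)
    (hzy : G.Adj z y) (hyw : y ≠ w) : y ∈ G.branch w a := by
  by_contra hy
  rw [hT.notMem_branch_iff hwa] at hy
  have hz : G.dist z w = G.dist z a + 1 := hz
  have hw := hT.dist_eq_dist_add_one_of_adj w hzy
  have ha := hT.dist_eq_dist_add_one_of_adj a hzy
  rw [dist_comm (u := w) (v := z), dist_comm (u := w) (v := y)] at hw
  rw [dist_comm (u := a) (v := z), dist_comm (u := a) (v := y)] at ha
  -- the two geodesics from `z` to `w`, through `y` and through `a`, must coincide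
  obtain ⟨q, hq, hql⟩ := hT.connected.exists_path_of_dist y w
  obtain ⟨p, -, hpl⟩ := hT.connected.exists_path_of_dist z a
  have hyq : (Walk.cons hzy q).IsPath := Walk.isPath_of_length_eq_dist _ (by simp; omega)
  have hpa : (p.concat hwa.symm).IsPath := Walk.isPath_of_length_eq_dist _ (by simp; omega)
  have haq : a ∈ (Walk.cons hzy q).support := by
    rw [(hT.existsUnique_path z w).unique hyq hpa]; simp
  rw [Walk.support_cons, List.mem_cons] at haq
  rcases haq with rfl | haq
  · exact hyw (hT.connected.dist_eq_zero_iff.1 (by simp only [dist_self] at hz ha; omega))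
  · have := hT.dist_eq_add_of_mem_support hq haq
    rw [dist_eq_one_iff_adj.2 hwa.symm] at this
    omega

theorem IsTree.dist_eq_add_of_notMem_branch (hT : G.IsTree) (hwa : G.Adj w a)
    (hy : y ∉ G.branch w a) (hz : z ∈ G.branch w a) : G.dist y z = G.dist y w + G.dist w z := by
  obtain ⟨p, hp, -⟩ := hT.connected.exists_path_of_dist y z
  obtain ⟨d, hd, hd₁, hd₂⟩ := p.exists_boundary_dart (G.branch w a)ᶜ hy (by simpa)
  have hdw : d.fst = w := by
    by_contra hne
    exact hd₁ (hT.mem_branch_of_adj hwa (not_not.1 hd₂) d.adj.symm hne)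
  exact hT.dist_eq_add_of_mem_support hp (hdw ▸ p.dart_fst_mem_support_of_mem_darts hd)

theorem IsTree.branch_subset_branch (hT : G.IsTree) (hwa : G.Adj w a) (hab : G.Adj a b)
    (hbw : b ≠ w) : G.branch a b ⊆ G.branch w a := by
  intro z hz
  have hw : w ∉ G.branch a b := fun h => hbw (hT.eq_of_mem_branch_of_adj h hwa.symm).symm
  have := hT.dist_eq_add_of_notMem_branch hab hw hz
  show G.dist z w = G.dist z a + 1
  rw [dist_comm, this, dist_eq_one_iff_adj.2 hwa, dist_comm]
  omega

theorem IsTree.dist_eq_add_two (hT : G.IsTree) (hwa : G.Adj w a) (hwb : G.Adj w b) (hab : a ≠ b)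
    (hz : z ∈ G.branch w a) : G.dist b z = G.dist a z + 2 := by
  have hb : b ∉ G.branch w a := fun h => hab (hT.eq_of_mem_branch_of_adj h hwb).symm
  have hz : G.dist z w = G.dist z a + 1 := hz
  rw [hT.dist_eq_add_of_notMem_branch hwa hb hz, dist_eq_one_iff_adj.2 hwb.symm,
    dist_comm (u := w), hz, dist_comm]
  omega

theorem IsTree.notMem_branch_of_mem_branch (hT : G.IsTree) (hwa : G.Adj w a) (hwb : G.Adj w b)
    (hab : a ≠ b) (hz : z ∈ G.branch w a) : z ∉ G.branch w b := fun hz' => by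
  have := hT.dist_eq_add_two hwa hwb hab hz
  have := hT.dist_eq_add_two hwb hwa hab.symm hz'
  omega

theorem IsTree.mem_branch_and_dist_eq_two (hT : G.IsTree) (hwa : G.Adj w a) (haz : G.Adj a z)
    (hzw : z ≠ w) : z ∈ G.branch w a ∧ G.dist z w = 2 := by
  have hz := hT.mem_branch_of_adj hwa (mem_branch_self hwa) haz hzw
  refine ⟨hz, ?_⟩
  have hz : G.dist z w = G.dist z a + 1 := hz
  rw [hz, dist_eq_one_iff_adj.2 haz.symm]

end Branch

end SimpleGraph

namespace DetPair

variable {V : Type*} {G : SimpleGraph V} {W L : Set V}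

theorem not_dominated_of_mem_branch (hT : G.IsTree) {w c z : V} (hwc : G.Adj w c)
    (hc : ∀ x ∈ G.branch w c, x ∉ W) (hz : z ∈ G.branch w c) (hz2 : 2 ≤ G.dist z w) :
    ¬ Dominated G W z := by
  rintro ⟨x, hxW, rfl | hxz⟩
  · exact hc x hz hxW
  · by_cases hxw : x = w
    · subst hxw
      obtain rfl := hT.eq_of_mem_branch_of_adj hz hxz
      rw [dist_eq_one_iff_adj.2 hwc.symm] at hz2
      omega
    · exact hc x (hT.mem_branch_of_adj hwc hz hxz.symm hxw) hxW

/-- Call a branch *clean* if it contains no watcher or listener. Vertices at equal depth ≥ 2 in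
clean branches at `w` are neither dominated nor separated: every listener sees them through `w`. -/
theorem eq_of_mem_clean_branches (hT : G.IsTree) (hWL : IsDetectionPair G W L)
    {w c₁ c₂ z₁ z₂ : V} (hwc₁ : G.Adj w c₁) (hwc₂ : G.Adj w c₂)
    (hc₁ : ∀ x ∈ G.branch w c₁, x ∉ W ∪ L) (hc₂ : ∀ x ∈ G.branch w c₂, x ∉ W ∪ L)
    (hz₁ : z₁ ∈ G.branch w c₁) (hz₂ : z₂ ∈ G.branch w c₂) (hd : G.dist z₁ w = G.dist z₂ w)
    (h2 : 2 ≤ G.dist z₁ w) : z₁ = z₂ := by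
  by_contra hne
  rcases hWL z₁ z₂ hne with hdom | hdom | ⟨l, hl, hsep⟩
  · exact not_dominated_of_mem_branch hT hwc₁ (fun x hx hxW => hc₁ x hx (.inl hxW)) hz₁ h2 hdom
  · exact not_dominated_of_mem_branch hT hwc₂ (fun x hx hxW => hc₂ x hx (.inl hxW)) hz₂
      (hd ▸ h2) hdom
  · have hl₁ : l ∉ G.branch w c₁ := fun h => hc₁ l h (.inr hl)
    have hl₂ : l ∉ G.branch w c₂ := fun h => hc₂ l h (.inr hl)
    apply hsep
    rw [dist_comm, hT.dist_eq_add_of_notMem_branch hwc₁ hl₁ hz₁, dist_comm (u := z₂),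
      hT.dist_eq_add_of_notMem_branch hwc₂ hl₂ hz₂, dist_comm (u := w) (v := z₁),
      dist_comm (u := w) (v := z₂), hd]

open scoped Classical in
noncomputable def retract (G : SimpleGraph V) (S D : Set V) (l : V) : V :=
  if h : l ∈ D ∧ ∃ x ∈ S, G.Adj x l then h.2.choose else l

theorem retract_of_notMem {S D : Set V} {l : V} (hl : l ∉ D) : retract G S D l = l := by
  simp [retract, hl]

section Finite

variable [Fintype V] [DecidableRel G.Adj]

theorem exists_adj_ne_of_degree_ne_one {w a : V} (hwa : G.Adj w a) (ha : G.degree a ≠ 1) :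
    ∃ z, G.Adj a z ∧ z ≠ w := by
  have : 0 < G.degree a := G.degree_pos_iff_exists_adj a |>.2 ⟨w, hwa.symm⟩
  obtain ⟨z, hz, hzw⟩ := Finset.exists_mem_ne (s := G.neighborFinset a)
    (by rw [card_neighborFinset_eq_degree]; omega) w
  exact ⟨z, (mem_neighborFinset _ _ _).1 hz, hzw⟩

theorem IsLeg.singleton_s15 {w c : V} (hwc : G.Adj w c) (hc : G.degree c = 1) : IsLeg G w [c] :=
  ⟨List.cons_ne_nil _ _, List.nodup_singleton c, by simpa using hwc.ne, List.isChain_pair.2 hwc,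
    ⟨c, rfl, hc⟩, by simp⟩

theorem IsLeg.cons {w c : V} {p : List V} (hp : IsLeg G c p) (hwc : G.Adj w c)
    (hc : G.degree c = 2) (hw : w ∉ p) : IsLeg G w (c :: p) := by
  obtain ⟨hne, hnd, hcp, hch, ⟨y, hy, hyd⟩, hdeg⟩ := hp
  obtain ⟨d, q, rfl⟩ := List.exists_cons_of_ne_nil hne
  refine ⟨List.cons_ne_nil _ _, List.nodup_cons.2 ⟨hcp, hnd⟩, by simp [hwc.ne, hw],
    List.IsChain.cons_cons hwc hch, ⟨y, by rwa [List.getLast?_cons_cons], hyd⟩, ?_⟩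
  rw [List.dropLast_cons_of_ne_nil (List.cons_ne_nil d q), List.forall_mem_cons]
  exact ⟨hc, hdeg⟩

theorem degree_eq_one_or_of_clean (hT : G.IsTree) (hWL : IsDetectionPair G W L) {w a b : V}
    (hwa : G.Adj w a) (hwb : G.Adj w b) (hab : a ≠ b) (ha : ∀ x ∈ G.branch w a, x ∉ W ∪ L)
    (hb : ∀ x ∈ G.branch w b, x ∉ W ∪ L) : G.degree a = 1 ∨ G.degree b = 1 := by
  by_contra! h
  obtain ⟨za, hza, hzaw⟩ := exists_adj_ne_of_degree_ne_one hwa h.1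
  obtain ⟨zb, hzb, hzbw⟩ := exists_adj_ne_of_degree_ne_one hwb h.2
  obtain ⟨hza, hza2⟩ := hT.mem_branch_and_dist_eq_two hwa hza hzaw
  obtain ⟨hzb, hzb2⟩ := hT.mem_branch_and_dist_eq_two hwb hzb hzbw
  have := eq_of_mem_clean_branches hT hWL hwa hwb ha hb hza hzb (hza2.trans hzb2.symm) hza2.ge
  exact hT.notMem_branch_of_mem_branch hwa hwb hab hza (this ▸ hzb)

/-- By `eq_of_mem_clean_branches` a clean branch whose root `c` is not a leaf has a unique vertex
at depth two, so `c` has degree 2 and the branch continues as a clean branch at `c`. -/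
theorem exists_isLeg_of_clean (hT : G.IsTree) (hWL : IsDetectionPair G W L) {w c : V}
    (hwc : G.Adj w c) (hc : ∀ x ∈ G.branch w c, x ∉ W ∪ L) :
    ∃ p, IsLeg G w p ∧ (∀ v ∈ p, v ∈ G.branch w c) ∧ (G.degree c ≠ 1 → 2 ≤ p.length) := by
  induction hn : (G.branch w c).ncard using Nat.strong_induction_on generalizing w c with
  | _ n ih =>
  by_cases hc1 : G.degree c = 1
  · exact ⟨[c], IsLeg.singleton_s15 hwc hc1, by simpa using mem_branch_self hwc, absurd hc1⟩
  obtain ⟨c', hcc', hc'w⟩ := exists_adj_ne_of_degree_ne_one hwc hc1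
  obtain ⟨hc'B, hc'2⟩ := hT.mem_branch_and_dist_eq_two hwc hcc' hc'w
  classical
  have hnbr : G.neighborFinset c = {w, c'} := by
    ext y
    simp only [mem_neighborFinset, Finset.mem_insert, Finset.mem_singleton]
    refine ⟨fun hy => or_iff_not_imp_left.2 fun hyw => ?_,
      by rintro (rfl | rfl); exacts [hwc.symm, hcc']⟩
    obtain ⟨hyB, hy2⟩ := hT.mem_branch_and_dist_eq_two hwc hy hyw
    exact eq_of_mem_clean_branches hT hWL hwc hwc hc hc hyB hc'B (hy2.trans hc'2.symm) hy2.ge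
  have hdeg : G.degree c = 2 := by
    rw [← card_neighborFinset_eq_degree, hnbr, Finset.card_pair hc'w.symm]
  have hsub := hT.branch_subset_branch hwc hcc' hc'w
  have hlt : (G.branch c c').ncard < n := hn ▸ Set.ncard_lt_ncard
    ((Set.ssubset_iff_of_subset hsub).2 ⟨c, mem_branch_self hwc, notMem_branch_left⟩)
  obtain ⟨p, hp, hpB, -⟩ := ih _ hlt hcc' (fun x hx => hc x (hsub hx)) rfl
  refine ⟨c :: p, hp.cons hwc hdeg fun hw => notMem_branch_left (hsub (hpB w hw)),
    List.forall_mem_cons.2 ⟨mem_branch_self hwc, fun v hv => hsub (hpB v hv)⟩, fun _ => ?_⟩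
  have := List.length_pos_of_ne_nil hp.1
  simp only [List.length_cons]
  omega

def leafNbrs (G : SimpleGraph V) [DecidableRel G.Adj] (x : V) : Set V :=
  {y | G.Adj x y ∧ G.degree y = 1}

def keptLeaves (G : SimpleGraph V) [DecidableRel G.Adj] (D : Set V) (x : V) : Set V :=
  leafNbrs G x \ D

theorem ncard_leafNbrs_le_degree (x : V) : (leafNbrs G x).ncard ≤ G.degree x := by
  rw [← card_neighborFinset_eq_degree, ← Set.ncard_coe_finset]
  exact Set.ncard_le_ncard fun y hy => by simpa using hy.1

theorem degree_ne_one_of_two_le_ncard_leafNbrs {x : V} (hx : 2 ≤ (leafNbrs G x).ncard) :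
    G.degree x ≠ 1 := by
  have := hx.trans (ncard_leafNbrs_le_degree x)
  omega

theorem IsDetectionPair.exists_mem_insert_leafNbrs (hWL : IsDetectionPair G W L)
    (hG : G.Connected) {x : V} (hx : 2 ≤ (leafNbrs G x).ncard) :
    ∃ y ∈ insert x (leafNbrs G x), y ∈ W ∪ L := by
  obtain ⟨u₁, hu₁, u₂, hu₂, hne⟩ := (Set.one_lt_ncard (Set.toFinite _)).1 hx
  have hdom : ∀ u ∈ leafNbrs G x, Dominated G W u → ∃ y ∈ insert x (leafNbrs G x), y ∈ W ∪ L := by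
    rintro u ⟨hxu, hu⟩ ⟨y, hyW, rfl | hyu⟩
    · exact ⟨y, .inr ⟨hxu, hu⟩, .inl hyW⟩
    · obtain rfl := (degree_eq_one_iff_existsUnique_adj.1 hu).unique hyu.symm hxu.symm
      exact ⟨y, .inl rfl, .inl hyW⟩
  rcases hWL u₁ u₂ hne with h | h | ⟨l, hl, hsep⟩
  · exact hdom u₁ hu₁ h
  · exact hdom u₂ hu₂ h
  · by_contra hcon
    have hl₁ : l ≠ u₁ := by rintro rfl; exact hcon ⟨l, .inr hu₁, .inr hl⟩
    have hl₂ : l ≠ u₂ := by rintro rfl; exact hcon ⟨l, .inr hu₂, .inr hl⟩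
    apply hsep
    rw [dist_comm, hG.dist_eq_add_one_of_degree_eq_one hu₁.2 hu₁.1.symm hl₁, dist_comm (u := u₂),
      hG.dist_eq_add_one_of_degree_eq_one hu₂.2 hu₂.1.symm hl₂]

/-- Charging: each vertex with two leaf neighbours has a watcher or listener among itself and
its leaves, and these closed neighbourhoods are pairwise disjoint. -/
theorem IsDetectionPair.ncard_add_ncard_le (hWL : IsDetectionPair G W L) (hG : G.Connected)
    {S X : Set V} (hS : ∀ x ∈ S, 2 ≤ (leafNbrs G x).ncard) (hXW : X ⊆ W) (hXS : Disjoint X S)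
    (hX : ∀ x ∈ X, 2 ≤ (leafNbrs G x).ncard) : S.ncard + X.ncard ≤ W.ncard + L.ncard := by
  choose! e he heWL using fun x hx => hWL.exists_mem_insert_leafNbrs hG (hS x hx)
  have hSdeg x hx : G.degree x ≠ 1 := degree_ne_one_of_two_le_ncard_leafNbrs (hS x hx)
  have hinj : Set.InjOn e S := by
    intro x₁ hx₁ x₂ hx₂ heq
    rcases he x₁ hx₁ with h₁ | ⟨hx₁e, he₁⟩ <;> rcases he x₂ hx₂ with h₂ | ⟨hx₂e, he₂⟩
    · rw [← h₁, ← h₂, heq]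
    · exact absurd (h₁ ▸ heq ▸ he₂) (hSdeg x₁ hx₁)
    · exact absurd (h₂ ▸ heq ▸ he₁) (hSdeg x₂ hx₂)
    · exact (degree_eq_one_iff_existsUnique_adj.1 he₁).unique hx₁e.symm (heq ▸ hx₂e.symm)
  have hdisj : Disjoint (e '' S) X := by
    rw [Set.disjoint_left]
    rintro _ ⟨x, hx, rfl⟩ hxX
    rcases he x hx with h | ⟨-, h⟩
    · exact Set.disjoint_left.1 hXS hxX (by rwa [h])
    · exact degree_ne_one_of_two_le_ncard_leafNbrs (hX _ hxX) h
  calc S.ncard + X.ncard = (e '' S ∪ X).ncard := by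
        rw [Set.ncard_union_eq hdisj, hinj.ncard_image]
    _ ≤ (W ∪ L).ncard := Set.ncard_le_ncard
        (Set.union_subset (Set.image_subset_iff.2 heWL) (hXW.trans Set.subset_union_left))
    _ ≤ W.ncard + L.ncard := Set.ncard_union_le W L

section Construction

open scoped Classical in
noncomputable def watcherRep (G : SimpleGraph V) [DecidableRel G.Adj] (S D : Set V) (w : V) : V :=
  if w ∈ D then retract G S D w
  else if h : (keptLeaves G D w).Nonempty then h.some else w

open scoped Classical in
noncomputable def secondKept (G : SimpleGraph V) [DecidableRel G.Adj] (S D : Set V) (w : V) : V :=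
  if h : (keptLeaves G D w \ {watcherRep G S D w}).Nonempty then h.some else w

def doubleWatchers (G : SimpleGraph V) [DecidableRel G.Adj] (S D W : Set V) : Set V :=
  {w ∈ W | w ∉ S ∧ 2 ≤ (keptLeaves G D w).ncard}

/-- The resolving set of `G - D` built from a detection pair `(W, L)` of `G`: listeners on
deleted leaves move to their stems, every watcher is replaced by one of its kept leaves (or by
itself, or by its stem if it is deleted), and watchers outside `S` with two kept leaves also
contribute the second one. -/
noncomputable def pairResolver (G : SimpleGraph V) [DecidableRel G.Adj] (S D W L : Set V) :
    Set V :=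
  retract G S D '' L ∪ watcherRep G S D '' W ∪ secondKept G S D '' doubleWatchers G S D W

variable {S D : Set V}

theorem retract_spec {l : V} (hD : ∀ y ∈ D, ∃ x ∈ S, G.Adj x y ∧ G.degree y = 1) (hl : l ∈ D) :
    retract G S D l ∈ S ∧ G.Adj (retract G S D l) l := by
  have h : l ∈ D ∧ ∃ x ∈ S, G.Adj x l := ⟨hl, (hD l hl).imp fun _ hx => ⟨hx.1, hx.2.1⟩⟩
  simp only [retract, dif_pos h]
  exact h.2.choose_spec

theorem retract_notMem (hD : ∀ y ∈ D, ∃ x ∈ S, G.Adj x y ∧ G.degree y = 1)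
    (hSD : Disjoint S D) (l : V) : retract G S D l ∉ D := by
  by_cases hl : l ∈ D
  · exact Set.disjoint_left.1 hSD (retract_spec hD hl).1
  · rwa [retract_of_notMem hl]

theorem watcherRep_of_mem {w : V} (hw : w ∈ D) : watcherRep G S D w = retract G S D w := by
  simp [watcherRep, hw]

theorem watcherRep_eq_of_adj (hD : ∀ y ∈ D, ∃ x ∈ S, G.Adj x y ∧ G.degree y = 1) {w a : V}
    (hw : w ∈ D) (hwa : G.Adj w a) : watcherRep G S D w = a := by
  obtain ⟨-, -, -, hw1⟩ := hD w hw
  rw [watcherRep_of_mem hw]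
  exact (degree_eq_one_iff_existsUnique_adj.1 hw1).unique (retract_spec hD hw).2.symm hwa

theorem watcherRep_mem_keptLeaves {w : V} (hw : w ∉ D) (h : (keptLeaves G D w).Nonempty) :
    watcherRep G S D w ∈ keptLeaves G D w := by
  simp only [watcherRep, if_neg hw, dif_pos h]
  exact h.some_mem

theorem watcherRep_of_not_nonempty {w : V} (hw : w ∉ D) (h : ¬ (keptLeaves G D w).Nonempty) :
    watcherRep G S D w = w := by
  simp only [watcherRep, if_neg hw, dif_neg h]

theorem dist_eq_of_dist_watcherRep_eq (hG : G.Connected) {w a b : V} (hw : w ∉ D)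
    (ha : a ≠ watcherRep G S D w) (hb : b ≠ watcherRep G S D w)
    (h : G.dist a (watcherRep G S D w) = G.dist b (watcherRep G S D w)) :
    G.dist a w = G.dist b w := by
  by_cases hK : (keptLeaves G D w).Nonempty
  · obtain ⟨⟨hws, hs⟩, -⟩ := watcherRep_mem_keptLeaves (S := S) hw hK
    rw [hG.dist_eq_add_one_of_degree_eq_one hs hws.symm ha,
      hG.dist_eq_add_one_of_degree_eq_one hs hws.symm hb] at h
    omega
  · rwa [watcherRep_of_not_nonempty hw hK] at h

theorem secondKept_spec {w : V} (h : 2 ≤ (keptLeaves G D w).ncard) :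
    secondKept G S D w ∈ keptLeaves G D w ∧ secondKept G S D w ≠ watcherRep G S D w := by
  have hne : (keptLeaves G D w \ {watcherRep G S D w}).Nonempty := by
    rw [Set.nonempty_iff_ne_empty, Ne, Set.sdiff_eq_empty]
    intro hsub
    have := Set.ncard_le_ncard hsub
    rw [Set.ncard_singleton] at this
    omega
  simp only [secondKept, dif_pos hne]
  exact hne.some_mem

theorem pairResolver_subset (hD : ∀ y ∈ D, ∃ x ∈ S, G.Adj x y ∧ G.degree y = 1)
    (hSD : Disjoint S D) : pairResolver G S D W L ⊆ Dᶜ := by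
  rintro _ ((⟨l, -, rfl⟩ | ⟨w, -, rfl⟩) | ⟨w, hw, rfl⟩)
  · exact retract_notMem hD hSD l
  · by_cases hwD : w ∈ D
    · rw [watcherRep_of_mem hwD]
      exact retract_notMem hD hSD w
    by_cases h : (keptLeaves G D w).Nonempty
    · exact (watcherRep_mem_keptLeaves hwD h).2
    · rwa [watcherRep_of_not_nonempty hwD h]
  · exact (secondKept_spec hw.2.2).1.2

theorem ncard_pairResolver_le :
    (pairResolver G S D W L).ncard ≤ L.ncard + W.ncard + (doubleWatchers G S D W).ncard :=
  calc (pairResolver G S D W L).ncard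
      ≤ (retract G S D '' L).ncard + (watcherRep G S D '' W).ncard +
          (secondKept G S D '' doubleWatchers G S D W).ncard := by
        refine (Set.ncard_union_le _ _).trans ?_
        gcongr
        exact Set.ncard_union_le _ _
    _ ≤ _ := by
        gcongr ?_ + ?_ + ?_ <;> exact Set.ncard_image_le (Set.toFinite _)

theorem exists_mem_pairResolver (hD : ∀ y ∈ D, ∃ x ∈ S, G.Adj x y ∧ G.degree y = 1) :
    ∀ x ∈ W ∪ L, ∃ r ∈ pairResolver G S D W L,
      r = x ∨ G.Adj x r ∧ (x ∈ D ∨ G.degree r = 1) := by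
  have hretract : ∀ x, retract G S D x = x ∨ G.Adj x (retract G S D x) ∧ x ∈ D := fun x => by
    by_cases hx : x ∈ D
    · exact .inr ⟨(retract_spec hD hx).2.symm, hx⟩
    · exact .inl (retract_of_notMem hx)
  rintro x (hx | hx)
  · refine ⟨watcherRep G S D x, .inl (.inr ⟨x, hx, rfl⟩), ?_⟩
    by_cases hxD : x ∈ D
    · rw [watcherRep_of_mem hxD]
      exact (hretract x).imp_right fun h => ⟨h.1, .inl h.2⟩
    by_cases h : (keptLeaves G D x).Nonempty
    · obtain ⟨⟨hxr, hr⟩, -⟩ := watcherRep_mem_keptLeaves (S := S) hxD h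
      exact .inr ⟨hxr, .inr hr⟩
    · exact .inl (watcherRep_of_not_nonempty hxD h)
  · exact ⟨retract G S D x, .inl (.inl ⟨x, hx, rfl⟩),
      (hretract x).imp_right fun h => ⟨h.1, .inl h.2⟩⟩

end Construction

variable {S D : Set V}

/-- A representative in `R` of a vertex of the `a`-branch lies in that branch too, hence is
closer to `a` than to `b`. -/
theorem notMem_of_mem_branch (hT : G.IsTree) {R X : Set V} {w a b : V} (hwa : G.Adj w a)
    (hwb : G.Adj w b) (hab : a ≠ b) (ha : a ∉ D) (hR : ∀ r ∈ R, G.dist a r = G.dist b r)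
    (hX : ∀ x ∈ X, ∃ r ∈ R, r = x ∨ G.Adj x r ∧ (x ∈ D ∨ G.degree r = 1)) :
    ∀ x ∈ G.branch w a, x ∉ X := by
  intro x hx hxX
  obtain ⟨r, hrR, hr⟩ := hX x hxX
  have hrB : r ∈ G.branch w a := by
    rcases hr with rfl | ⟨hxr, hr⟩
    · exact hx
    refine hT.mem_branch_of_adj hwa hx hxr ?_
    rintro rfl
    obtain rfl := hT.eq_of_mem_branch_of_adj hx hxr.symm
    rcases hr with hxD | hr
    · exact ha hxD
    · exact hab ((degree_eq_one_iff_existsUnique_adj.1 hr).unique hwa hwb)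
  have := hT.dist_eq_add_two hwa hwb hab hrB
  have := hR r hrR
  omega

theorem false_of_degree_eq_one_of_adj_watcher (hT : G.IsTree) (hWL : IsDetectionPair G W L)
    (hK : ∀ x, (keptLeaves G D x).ncard ≤ 2)
    (hleg : ∀ x ∈ S, 2 ≤ (keptLeaves G D x).ncard → ∀ p, IsLeg G x p → p.length < 2)
    {w a b : V} (hw : w ∈ W) (hwD : w ∉ D) (hwa : G.Adj w a) (hwb : G.Adj w b) (hab : a ≠ b)
    (ha : a ∉ D) (hb : b ∉ D) (hcb : ∀ x ∈ G.branch w b, x ∉ W ∪ L)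
    (hR : ∀ r ∈ pairResolver G S D W L, a ≠ r ∧ b ≠ r) (ha1 : G.degree a = 1) : False := by
  have haK : a ∈ keptLeaves G D w := ⟨⟨hwa, ha1⟩, ha⟩
  have hsK := watcherRep_mem_keptLeaves (S := S) hwD ⟨a, haK⟩
  have hsR : watcherRep G S D w ∈ pairResolver G S D W L := .inl (.inr ⟨w, hw, rfl⟩)
  have hK2 : 2 ≤ (keptLeaves G D w).ncard :=
    (Set.one_lt_ncard (Set.toFinite _)).2 ⟨a, haK, _, hsK, (hR _ hsR).1⟩
  have hthird : ∀ t ∈ keptLeaves G D w, t ≠ a → t ≠ watcherRep G S D w → False :=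
    fun t ht hta hts => (hK w).not_gt <| (Set.two_lt_ncard_iff (Set.toFinite _)).2
      ⟨a, _, t, haK, hsK, ht, (hR _ hsR).1, hta.symm, hts.symm⟩
  by_cases hb1 : G.degree b = 1
  · exact hthird b ⟨⟨hwb, hb1⟩, hb⟩ hab.symm (hR _ hsR).2
  obtain ⟨p, hp, -, hp2⟩ := exists_isLeg_of_clean hT hWL hwb hcb
  by_cases hwS : w ∈ S
  · exact (hp2 hb1).not_gt (hleg w hwS hK2 p hp)
  obtain ⟨htK, hts⟩ := secondKept_spec (S := S) hK2
  have htR : secondKept G S D w ∈ pairResolver G S D W L := .inr ⟨w, ⟨hw, hwS, hK2⟩, rfl⟩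
  exact hthird _ htK (hR _ htR).1.symm hts

theorem eq_of_adj_watcher (hT : G.IsTree) (hWL : IsDetectionPair G W L)
    (hD : ∀ y ∈ D, ∃ x ∈ S, G.Adj x y ∧ G.degree y = 1) (hK : ∀ x, (keptLeaves G D x).ncard ≤ 2)
    (hleg : ∀ x ∈ S, 2 ≤ (keptLeaves G D x).ncard → ∀ p, IsLeg G x p → p.length < 2)
    {w a b : V} (hw : w ∈ W) (hwD : w ∉ D) (hwa : G.Adj w a) (hwb : G.Adj w b) (ha : a ∉ D)
    (hb : b ∉ D) (hR : ∀ r ∈ pairResolver G S D W L, G.dist a r = G.dist b r) : a = b := by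
  by_contra hab
  have hR' : ∀ r ∈ pairResolver G S D W L, G.dist b r = G.dist a r := fun r hr => (hR r hr).symm
  have hne : ∀ r ∈ pairResolver G S D W L, a ≠ r ∧ b ≠ r := fun r hr =>
    ⟨fun h => hab (hT.connected.eq_of_forall_dist_eq hR (h ▸ hr)),
      fun h => hab (hT.connected.eq_of_forall_dist_eq hR' (h ▸ hr)).symm⟩
  have hrep := exists_mem_pairResolver (W := W) (L := L) hD
  have hca := notMem_of_mem_branch hT hwa hwb hab ha hR hrep
  have hcb := notMem_of_mem_branch hT hwb hwa (Ne.symm hab) hb hR' hrep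
  rcases degree_eq_one_or_of_clean hT hWL hwa hwb hab hca hcb with h | h
  · exact false_of_degree_eq_one_of_adj_watcher hT hWL hK hleg hw hwD hwa hwb hab ha hb hcb hne h
  · exact false_of_degree_eq_one_of_adj_watcher hT hWL hK hleg hw hwD hwb hwa (Ne.symm hab) hb ha
      hca (fun r hr => (hne r hr).symm) h

theorem eq_of_dominated (hT : G.IsTree) (hWL : IsDetectionPair G W L)
    (hD : ∀ y ∈ D, ∃ x ∈ S, G.Adj x y ∧ G.degree y = 1) (hK : ∀ x, (keptLeaves G D x).ncard ≤ 2)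
    (hleg : ∀ x ∈ S, 2 ≤ (keptLeaves G D x).ncard → ∀ p, IsLeg G x p → p.length < 2)
    {a b : V} (ha : a ∉ D) (hb : b ∉ D)
    (hR : ∀ r ∈ pairResolver G S D W L, G.dist a r = G.dist b r) (hdom : Dominated G W a) :
    a = b := by
  obtain ⟨w, hw, hwa⟩ := hdom
  have hsR : watcherRep G S D w ∈ pairResolver G S D W L := .inl (.inr ⟨w, hw, rfl⟩)
  by_cases hwD : w ∈ D
  · rcases hwa with rfl | hwa
    · exact absurd hwD ha
    exact hT.connected.eq_of_forall_dist_eq hR (watcherRep_eq_of_adj hD hwD hwa ▸ hsR)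
  by_contra hab
  have hdw : G.dist a w = G.dist b w := dist_eq_of_dist_watcherRep_eq hT.connected hwD
    (fun h => hab (hT.connected.eq_of_forall_dist_eq hR (h ▸ hsR)))
    (fun h => hab (hT.connected.eq_of_forall_dist_eq (fun r hr => (hR r hr).symm) (h ▸ hsR)).symm)
    (hR _ hsR)
  rcases hwa with rfl | hwa
  · rw [dist_self, eq_comm, hT.connected.dist_eq_zero_iff] at hdw
    exact hab hdw.symm
  have hwb : G.Adj w b := by
    rw [← dist_eq_one_iff_adj, dist_comm, ← hdw, dist_comm, dist_eq_one_iff_adj]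
    exact hwa
  exact hab (eq_of_adj_watcher hT hWL hD hK hleg hw hwD hwa hwb ha hb hR)

theorem exists_mem_pairResolver_dist_ne (hT : G.IsTree) (hWL : IsDetectionPair G W L)
    (hD : ∀ y ∈ D, ∃ x ∈ S, G.Adj x y ∧ G.degree y = 1) (hK : ∀ x, (keptLeaves G D x).ncard ≤ 2)
    (hleg : ∀ x ∈ S, 2 ≤ (keptLeaves G D x).ncard → ∀ p, IsLeg G x p → p.length < 2)
    {a b : V} (ha : a ∉ D) (hb : b ∉ D) (hab : a ≠ b) :
    ∃ r ∈ pairResolver G S D W L, G.dist a r ≠ G.dist b r := by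
  by_contra! hR
  rcases hWL a b hab with hdom | hdom | ⟨l, hl, hsep⟩
  · exact hab (eq_of_dominated hT hWL hD hK hleg ha hb hR hdom)
  · exact hab (eq_of_dominated hT hWL hD hK hleg hb ha (fun r hr => (hR r hr).symm) hdom).symm
  have hr := hR (retract G S D l) (.inl (.inl ⟨l, hl, rfl⟩))
  by_cases hlD : l ∈ D
  · obtain ⟨-, -, -, hl1⟩ := hD l hlD
    have hadj := (retract_spec hD hlD).2.symm
    apply hsep
    rw [hT.connected.dist_eq_add_one_of_degree_eq_one hl1 hadj (by rintro rfl; exact ha hlD),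
      hT.connected.dist_eq_add_one_of_degree_eq_one hl1 hadj (by rintro rfl; exact hb hlD), hr]
  · exact hsep (retract_of_notMem hlD ▸ hr)

def longLegs (G : SimpleGraph V) [DecidableRel G.Adj] (x : V) : Set (List V) :=
  {p | IsLeg G x p ∧ 2 ≤ p.length}

theorem finite_longLegs (x : V) : (longLegs G x).Finite :=
  (List.finite_length_le V (Fintype.card V)).subset fun _ hp => hp.1.2.1.length_le_card

theorem ncard_keptLeaves_eq {x : V} {n : ℕ} (hx : 3 ≤ (leafNbrs G x).ncard)
    (hD : (D ∩ leafNbrs G x).ncard =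
      if 2 ≤ n then (leafNbrs G x).ncard
      else if n = 1 then (leafNbrs G x).ncard - 1 else (leafNbrs G x).ncard - 2) :
    (keptLeaves G D x).ncard = if 2 ≤ n then 0 else if n = 1 then 1 else 2 := by
  rw [keptLeaves, ← Set.sdiff_inter_self_eq_sdiff, Set.ncard_sdiff Set.inter_subset_right, hD]
  split_ifs <;> omega

theorem ncard_keptLeaves_le_two (hS : ∀ x, 3 ≤ (leafNbrs G x).ncard → x ∈ S)
    (hkept : ∀ x ∈ S, (keptLeaves G D x).ncard =
      if 2 ≤ (longLegs G x).ncard then 0 else if (longLegs G x).ncard = 1 then 1 else 2)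
    (x : V) : (keptLeaves G D x).ncard ≤ 2 := by
  by_cases hx : x ∈ S
  · rw [hkept x hx]
    split_ifs <;> omega
  · have := Set.ncard_le_ncard (Set.sdiff_subset (s := leafNbrs G x) (t := D))
    have := mt (hS x) hx
    rw [keptLeaves]
    omega

theorem length_lt_two_of_isLeg
    (hkept : ∀ x ∈ S, (keptLeaves G D x).ncard =
      if 2 ≤ (longLegs G x).ncard then 0 else if (longLegs G x).ncard = 1 then 1 else 2)
    {x : V} (hx : x ∈ S) (h2 : 2 ≤ (keptLeaves G D x).ncard) {p : List V} (hp : IsLeg G x p) :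
    p.length < 2 := by
  have hzero : (longLegs G x).ncard = 0 := by
    rw [hkept x hx] at h2
    split_ifs at h2 <;> omega
  rw [Set.ncard_eq_zero (finite_longLegs x)] at hzero
  by_contra! hlen
  exact (Set.mem_empty_iff_false p).1 (hzero ▸ ⟨hp, hlen⟩)

end Finite

theorem exists_isDetectionPair_ncard_eq_DP (G : SimpleGraph V) :
    ∃ W L : Set V, IsDetectionPair G W L ∧ W.ncard + L.ncard = DP G :=
  Nat.sInf_mem (s := {n | ∃ W L : Set V, IsDetectionPair G W L ∧ W.ncard + L.ncard = n})
    ⟨_, Set.univ, ∅, fun u _ _ => .inl ⟨u, trivial, .inl rfl⟩, rfl⟩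

theorem isDetectionPair_of_isResolving_induce (hG : G.Connected) {s : Set V}
    (hs : ∀ v ∉ s, (G.neighborSet v).Subsingleton) (hW : ∀ v ∉ s, Dominated G W v)
    {R : Set s} (hR : IsResolving (G.induce s) R) : IsDetectionPair G W (Subtype.val '' R) := by
  intro u v huv
  by_cases hu : u ∈ s
  swap; exact .inl (hW u hu)
  by_cases hv : v ∈ s
  swap; exact .inr (.inl (hW v hv))
  obtain ⟨l, hl, hsep⟩ := hR ⟨u, hu⟩ ⟨v, hv⟩ (by simpa using huv)
  refine .inr (.inr ⟨l, ⟨l, hl, rfl⟩, ?_⟩)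
  rwa [hG.dist_induce hs, hG.dist_induce hs] at hsep

theorem MD_induce_le (hG : G.Connected) {s R : Set V}
    (hs : ∀ v ∉ s, (G.neighborSet v).Subsingleton) (hRs : R ⊆ s)
    (hR : ∀ a b, a ∈ s → b ∈ s → a ≠ b → ∃ r ∈ R, G.dist a r ≠ G.dist b r) :
    MD (G.induce s) ≤ R.ncard := by
  refine (Nat.sInf_le (s := {n | ∃ L : Set s, IsResolving (G.induce s) L ∧ L.ncard = n})
    ⟨Subtype.val ⁻¹' R, fun u v huv => ?_, rfl⟩).trans
    (Set.ncard_preimage_of_injective_subset_range Subtype.val_injective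
      (Subtype.range_coe ▸ hRs)).le
  obtain ⟨r, hr, hsep⟩ := hR u v u.2 v.2 (Subtype.val_injective.ne huv)
  exact ⟨⟨r, hRs hr⟩, hr, by rwa [hG.dist_induce hs, hG.dist_induce hs]⟩

theorem stmt15_general [Fintype V] (G : SimpleGraph V) [DecidableRel G.Adj]
    (hT : G.IsTree)
    (S : Set V)
    (hS : S = {x | 3 ≤ G.degree x ∧ 3 ≤ {y | G.Adj x y ∧ G.degree y = 1}.ncard})
    (D : Set V)
    (hDsub : D ⊆ {y | ∃ x ∈ S, G.Adj x y ∧ G.degree y = 1})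
    (hDcount : ∀ x ∈ S,
      (D ∩ {y | G.Adj x y ∧ G.degree y = 1}).ncard =
        (if 2 ≤ {p | IsLeg G x p ∧ 2 ≤ p.length}.ncard then
            {y | G.Adj x y ∧ G.degree y = 1}.ncard
          else if {p | IsLeg G x p ∧ 2 ≤ p.length}.ncard = 1 then
            {y | G.Adj x y ∧ G.degree y = 1}.ncard - 1
          else {y | G.Adj x y ∧ G.degree y = 1}.ncard - 2))
    (R : Set ↥(Dᶜ)) (hR : IsResolving (G.induce Dᶜ) R)
    (hRopt : R.ncard = MD (G.induce Dᶜ)) :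
    IsDetectionPair G S (Subtype.val '' R) ∧ S.ncard + R.ncard ≤ 2 * DP G := by
  have hG := hT.connected
  have hD : ∀ y ∈ D, ∃ x ∈ S, G.Adj x y ∧ G.degree y = 1 := fun y hy => hDsub hy
  have hSleaves : ∀ x ∈ S, 3 ≤ (leafNbrs G x).ncard := fun x hx => (hS ▸ hx).2
  have hSD : Disjoint S D := Set.disjoint_left.2 fun x hxS hxD =>
    degree_ne_one_of_two_le_ncard_leafNbrs (by linarith [hSleaves x hxS])
      (hD x hxD).choose_spec.2.2
  have hs : ∀ v ∉ Dᶜ, (G.neighborSet v).Subsingleton := fun v hv x hx y hy =>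
    (degree_eq_one_iff_existsUnique_adj.1 (hD v (not_not.1 hv)).choose_spec.2.2).unique hx hy
  have hkept : ∀ x ∈ S, (keptLeaves G D x).ncard =
      if 2 ≤ (longLegs G x).ncard then 0 else if (longLegs G x).ncard = 1 then 1 else 2 :=
    fun x hx => ncard_keptLeaves_eq (hSleaves x hx) (hDcount x hx)
  have hK := ncard_keptLeaves_le_two
    (fun x hx => hS ▸ ⟨hx.trans (ncard_leafNbrs_le_degree x), hx⟩) hkept
  refine ⟨isDetectionPair_of_isResolving_induce hG hs
    (fun v hv => (hD v (not_not.1 hv)).imp fun x hx => ⟨hx.1, .inr hx.2.1⟩) hR, ?_⟩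
  obtain ⟨W, L, hWL, hcard⟩ := exists_isDetectionPair_ncard_eq_DP G
  have hcharge := hWL.ncard_add_ncard_le hG (fun x hx => by linarith [hSleaves x hx])
    (X := doubleWatchers G S D W) (fun w hw => hw.1) (Set.disjoint_left.2 fun w hw => hw.2.1)
    fun w hw => hw.2.2.trans (Set.ncard_le_ncard Set.sdiff_subset)
  have hMD := MD_induce_le hG hs (pairResolver_subset (W := W) (L := L) hD hSD)
    fun a b ha hb hab => exists_mem_pairResolver_dist_ne hT hWL hD hK
      (fun x hx h2 p hp => length_lt_two_of_isLeg hkept hx h2 hp) ha hb hab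
  have := ncard_pairResolver_le (G := G) (S := S) (D := D) (W := W) (L := L)
  omega

/-- The 2-approximation on trees: letting `S` be the set of t-stems with t ≥ 3 and `R`
an optimal resolving set of the tree `T′` obtained by the prescribed leaf deletions,
the pair (S, R) is a detection pair of `T` of size at most 2·DP(T). -/
theorem stmt15 [Fintype V] (G : SimpleGraph V) [DecidableRel G.Adj]
    (hT : G.IsTree) (hn : 2 ≤ Fintype.card V)
    (S : Set V)
    (hS : S = {x | 3 ≤ G.degree x ∧ 3 ≤ {y | G.Adj x y ∧ G.degree y = 1}.ncard})
    (D : Set V)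
    (hDsub : D ⊆ {y | ∃ x ∈ S, G.Adj x y ∧ G.degree y = 1})
    (hDcount : ∀ x ∈ S,
      (D ∩ {y | G.Adj x y ∧ G.degree y = 1}).ncard =
        (if 2 ≤ {p | IsLeg G x p ∧ 2 ≤ p.length}.ncard then
            {y | G.Adj x y ∧ G.degree y = 1}.ncard
          else if {p | IsLeg G x p ∧ 2 ≤ p.length}.ncard = 1 then
            {y | G.Adj x y ∧ G.degree y = 1}.ncard - 1
          else {y | G.Adj x y ∧ G.degree y = 1}.ncard - 2))
    (R : Set ↥(Dᶜ)) (hR : IsResolving (G.induce Dᶜ) R)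
    (hRopt : R.ncard = MD (G.induce Dᶜ)) :
    IsDetectionPair G S (Subtype.val '' R) ∧ S.ncard + R.ncard ≤ 2 * DP G :=
  stmt15_general G hT S hS D hDsub hDcount R hR hRopt

end DetPair
end
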